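/- arXiv:math/0609355 — 5 statements merged into one kernel-verified Lean document; each statement's English description precedes it below -/
import Mathlib

section
/- In the del Pezzo lattice of rank 9 (δ = 8), a class (a; b₁, …, b₈) is a conic class if and only if, after a permutation of the coordinates (b₁, …, b₈), it is one of the following fifteen vectors: (1;1,0,0,0,0,0,0,0), (2;1,1,1,1,0,0,0,0), (3;2,1,1,1,1,1,0,0), (4;2,2,2,1,1,1,1,0), (5;2,2,2,2,2,2,1,0), (4;3,1,1,1,1,1,1,1), (5;3,2,2,2,1,1,1,1), (6;3,3,2,2,2,2,1,1), (7;3,3,3,3,2,2,2,1), (7;4,3,2,2,2,2,2,2), (8;4,3,3,3,3,2,2,2), (8;3,3,3,3,3,3,3,1), (9;4,4,3,3,3,3,3,2), (10;4,4,4,4,3,3,3,3), (11;4,4,4,4,4,4,4,3). -/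
/-- A class in the del Pezzo lattice of rank `1 + δ`: the pair `(a, b)`
represents `a·ℓ − b₁e₁ − ⋯ − b_δ e_δ`. -/
abbrev Cls (δ : ℕ) : Type := ℤ × (Fin δ → ℤ)

/-- The intersection product: `(a;b)·(a';b') = a a' − Σ bᵢ bᵢ'`. -/
def ip {δ : ℕ} (x y : Cls δ) : ℤ := x.1 * y.1 - ∑ i, x.2 i * y.2 i

/-- The canonical class `K = −3ℓ + e₁ + ⋯ + e_δ`, i.e. `(−3; −1, …, −1)`. -/
def Kcls (δ : ℕ) : Cls δ := (-3, fun _ => -1)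

/-- A conic class: `Q·Q = 0` and `K·Q = −2`. -/
def IsConic {δ : ℕ} (Q : Cls δ) : Prop := ip Q Q = 0 ∧ ip (Kcls δ) Q = -2

/-- A `(−1)`-class: `L·L = −1` and `K·L = −1`. -/
def IsMinusOne {δ : ℕ} (L : Cls δ) : Prop := ip L L = -1 ∧ ip (Kcls δ) L = -1

/-- Membership in the Weyl group `W_δ`: a ℤ-linear automorphism of the lattice
preserving the intersection form and fixing the canonical class. -/
def IsWeyl {δ : ℕ} (g : Cls δ ≃ₗ[ℤ] Cls δ) : Prop :=
  (∀ x y : Cls δ, ip (g x) (g y) = ip x y) ∧ g (Kcls δ) = Kcls δ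

/-- The fifteen types of conic classes on the del Pezzo lattice of rank 9. -/
def conicList : List (Cls 8) :=
  [ (1, ![1,0,0,0,0,0,0,0]),
    (2, ![1,1,1,1,0,0,0,0]),
    (3, ![2,1,1,1,1,1,0,0]),
    (4, ![2,2,2,1,1,1,1,0]),
    (5, ![2,2,2,2,2,2,1,0]),
    (4, ![3,1,1,1,1,1,1,1]),
    (5, ![3,2,2,2,1,1,1,1]),
    (6, ![3,3,2,2,2,2,1,1]),
    (7, ![3,3,3,3,2,2,2,1]),
    (7, ![4,3,2,2,2,2,2,2]),
    (8, ![4,3,3,3,3,2,2,2]),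
    (8, ![3,3,3,3,3,3,3,1]),
    (9, ![4,4,3,3,3,3,3,2]),
    (10, ![4,4,4,4,3,3,3,3]),
    (11, ![4,4,4,4,4,4,4,3]) ]

set_option maxRecDepth 10000 in
lemma keyLem : ∀ a ∈ Finset.Icc (1:ℤ) 11, ∀ b0 ∈ Finset.Icc (0:ℤ) 4,
    ∀ b1 ∈ Finset.Icc (0:ℤ) b0, ∀ b2 ∈ Finset.Icc (0:ℤ) b1, ∀ b3 ∈ Finset.Icc (0:ℤ) b2,
    ∀ b4 ∈ Finset.Icc (0:ℤ) b3, ∀ b5 ∈ Finset.Icc (0:ℤ) b4, ∀ b6 ∈ Finset.Icc (0:ℤ) b5,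
    ∀ b7 ∈ Finset.Icc (0:ℤ) b6,
    b0+b1+b2+b3+b4+b5+b6+b7 = 3*a-2 →
    b0*b0+b1*b1+b2*b2+b3*b3+b4*b4+b5*b5+b6*b6+b7*b7 = a*a →
    ((a, ![b0,b1,b2,b3,b4,b5,b6,b7]) : Cls 8) ∈ conicList := by decide

lemma allConic : ∀ v ∈ conicList, IsConic v := by
  intro v hv
  fin_cases hv <;> exact ⟨by decide, by decide⟩

/-- A class in the rank-9 del Pezzo lattice is a conic class iff, after a
permutation of the coordinates b₁, …, b₈, it is one of the fifteen listed
vectors. -/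
theorem stmt1 (C : Cls 8) :
    IsConic C ↔
      ∃ σ : Equiv.Perm (Fin 8), ((C.1, fun i => C.2 (σ i)) : Cls 8) ∈ conicList := by
  obtain ⟨a, b⟩ := C
  constructor
  · rintro ⟨h1, h2⟩
    simp only [ip, Kcls, neg_mul, one_mul, Finset.sum_neg_distrib, sub_neg_eq_add] at h1 h2
    have hs : ∑ i, b i = 3*a - 2 := by linarith
    have hq : ∑ i, b i * b i = a * a := by linarith
    have hq2 : ∑ i, b i ^ 2 = a * a := by simpa only [pow_two] using hq
    have cs := Finset.sum_mul_sq_le_sq_mul_sq Finset.univ b (fun _ => (1:ℤ))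
    simp only [mul_one, one_pow, Finset.sum_const, Finset.card_univ, Fintype.card_fin,
      nsmul_eq_mul, Nat.cast_ofNat, hs, hq2] at cs
    have ha1 : 1 ≤ a := by nlinarith [cs, sq_nonneg a]
    have ha2 : a ≤ 11 := by
      by_contra h
      push_neg at h
      nlinarith [cs, mul_nonneg (by linarith : (0:ℤ) ≤ a) (by linarith : (0:ℤ) ≤ a - 12)]
    have hCS : ∀ i : Fin 8, (3*a - 2 - b i)^2 ≤ (a*a - b i ^ 2) * 7 := by
      intro i
      have h := Finset.sum_mul_sq_le_sq_mul_sq (Finset.univ.erase i) b (fun _ => (1:ℤ))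
      have e1 : ∑ j ∈ Finset.univ.erase i, b j = 3*a - 2 - b i := by
        have h3 : b i + ∑ j ∈ Finset.univ.erase i, b j = 3*a - 2 := by
          rw [← hs]; exact Finset.add_sum_erase Finset.univ b (Finset.mem_univ i)
        linarith
      have e2 : ∑ j ∈ Finset.univ.erase i, b j ^ 2 = a*a - b i ^ 2 := by
        have h3 : b i ^ 2 + ∑ j ∈ Finset.univ.erase i, b j ^ 2 = a*a := by
          rw [← hq2]; exact Finset.add_sum_erase Finset.univ (fun j => b j ^ 2) (Finset.mem_univ i)
        linarith
      simp only [mul_one, one_pow, Finset.sum_const, nsmul_eq_mul, e1, e2,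
        Finset.card_erase_of_mem (Finset.mem_univ i), Finset.card_univ, Fintype.card_fin] at h
      norm_num at h
      linarith [h]
    have hb : ∀ i, 0 ≤ b i ∧ b i ≤ 4 := by
      intro i
      constructor
      · by_contra h
        push_neg at h
        have h' : b i ≤ -1 := by omega
        nlinarith [hCS i, mul_nonneg (by linarith : (0:ℤ) ≤ -(b i + 1))
          (by linarith : (0:ℤ) ≤ -(8*b i - 6*a - 4)), sq_nonneg (2*a - 3)]
      · by_contra h
        push_neg at h
        have h' : 5 ≤ b i := by omega
        nlinarith [hCS i, mul_nonneg (by linarith : (0:ℤ) ≤ b i - 5)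
          (by linarith : (0:ℤ) ≤ 8*b i - 6*a + 44), sq_nonneg (2*a - 21)]
    set s := Tuple.sort b with hsdef
    have hm : Monotone (b ∘ s) := Tuple.monotone_sort b
    have hsum8 : ∑ i, b (s i) = 3*a - 2 := (Equiv.sum_comp s b).trans hs
    have hsq8 : ∑ i, b (s i) * b (s i) = a * a :=
      (Equiv.sum_comp s (fun j => b j * b j)).trans hq
    rw [Fin.sum_univ_eight] at hsum8 hsq8
    have hmem := keyLem a (Finset.mem_Icc.mpr ⟨ha1, ha2⟩)
      (b (s 7)) (Finset.mem_Icc.mpr ⟨(hb _).1, (hb _).2⟩)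
      (b (s 6)) (Finset.mem_Icc.mpr ⟨(hb _).1, hm (by decide : (6:Fin 8) ≤ 7)⟩)
      (b (s 5)) (Finset.mem_Icc.mpr ⟨(hb _).1, hm (by decide : (5:Fin 8) ≤ 6)⟩)
      (b (s 4)) (Finset.mem_Icc.mpr ⟨(hb _).1, hm (by decide : (4:Fin 8) ≤ 5)⟩)
      (b (s 3)) (Finset.mem_Icc.mpr ⟨(hb _).1, hm (by decide : (3:Fin 8) ≤ 4)⟩)
      (b (s 2)) (Finset.mem_Icc.mpr ⟨(hb _).1, hm (by decide : (2:Fin 8) ≤ 3)⟩)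
      (b (s 1)) (Finset.mem_Icc.mpr ⟨(hb _).1, hm (by decide : (1:Fin 8) ≤ 2)⟩)
      (b (s 0)) (Finset.mem_Icc.mpr ⟨(hb _).1, hm (by decide : (0:Fin 8) ≤ 1)⟩)
      (by linarith) (by linarith)
    refine ⟨(Fin.revPerm).trans s, ?_⟩
    have he : (fun i => b (((Fin.revPerm).trans s) i))
        = ![b (s 7), b (s 6), b (s 5), b (s 4), b (s 3), b (s 2), b (s 1), b (s 0)] := by
      funext i; fin_cases i <;> rfl
    show ((a, fun i => b (((Fin.revPerm).trans s) i)) : Cls 8) ∈ conicList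
    rw [he]
    exact hmem
  · rintro ⟨σ, hmem⟩
    have hc := allConic _ hmem
    obtain ⟨h1, h2⟩ := hc
    simp only [ip, Kcls] at h1 h2
    have e1 : ∑ i, b (σ i) * b (σ i) = ∑ i, b i * b i :=
      Equiv.sum_comp σ (fun j => b j * b j)
    have e2 : ∑ i, (-1 : ℤ) * b (σ i) = ∑ i, (-1 : ℤ) * b i :=
      Equiv.sum_comp σ (fun j => (-1 : ℤ) * b j)
    refine ⟨?_, ?_⟩
    · simp only [ip]
      rw [← e1]
      exact h1
    · simp only [ip, Kcls]
      rw [← e2]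
      exact h2
end

section
/- Let 2 ≤ δ ≤ 8. For any two conic classes Q₁, Q₂ in the del Pezzo lattice of rank 1+δ there exists an element g of the Weyl group W_δ with g(Q₁) = Q₂; that is, W_δ acts transitively on the set of conic classes. -/
theorem Fintype.exists_three_largest {ι β : Type*} [Fintype ι] [DecidableEq ι] [LinearOrder β]
    (b : ι → β) (h : 3 ≤ Fintype.card ι) :
    ∃ i j k, i ≠ j ∧ i ≠ k ∧ j ≠ k ∧ b j ≤ b i ∧ b k ≤ b j ∧
      ∀ l, l ≠ i → l ≠ j → l ≠ k → b l ≤ b k := by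
  obtain ⟨i, -, hi⟩ := Finset.exists_max_image Finset.univ b
    (Finset.card_pos.1 (by simp; omega))
  obtain ⟨j, hj, hj'⟩ := Finset.exists_max_image (Finset.univ.erase i) b
    (Finset.card_pos.1 (by simp [Finset.card_erase_of_mem]; omega))
  obtain ⟨k, hk, hk'⟩ := Finset.exists_max_image ((Finset.univ.erase i).erase j) b
    (Finset.card_pos.1 (by simp [Finset.card_erase_of_mem hj]; omega))
  simp only [Finset.mem_erase, Finset.mem_univ, and_true] at hj hj' hk hk'
  exact ⟨i, j, k, Ne.symm hj, Ne.symm hk.2, Ne.symm hk.1, hi j (Finset.mem_univ _),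
    hj' k hk.2, fun l hli hlj _ => hk' l ⟨hlj, hli⟩⟩

namespace DelPezzo

variable {δ : ℕ}

theorem ip_comm (x y : Cls δ) : ip x y = ip y x := by
  simp only [ip, mul_comm]

theorem ip_add_left (x y z : Cls δ) : ip (x + y) z = ip x z + ip y z := by
  simp only [ip, Prod.fst_add, Prod.snd_add, Pi.add_apply, add_mul, Finset.sum_add_distrib]
  ring

theorem ip_smul_left (c : ℤ) (x y : Cls δ) : ip (c • x) y = c * ip x y := by
  simp only [ip, Prod.smul_fst, Prod.smul_snd, Pi.smul_apply, smul_eq_mul, mul_assoc,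
    ← Finset.mul_sum]
  ring

theorem ip_add_right (x y z : Cls δ) : ip x (y + z) = ip x y + ip x z := by
  rw [ip_comm, ip_add_left, ip_comm y, ip_comm z]

theorem ip_smul_right (c : ℤ) (x y : Cls δ) : ip x (c • y) = c * ip x y := by
  rw [ip_comm, ip_smul_left, ip_comm]

def ipForm : LinearMap.BilinForm ℤ (Cls δ) :=
  LinearMap.mk₂ ℤ ip ip_add_left (fun c x y => by rw [ip_smul_left, smul_eq_mul])
    ip_add_right (fun c x y => by rw [ip_smul_right, smul_eq_mul])

@[simp]
theorem ipForm_apply (x y : Cls δ) : ipForm x y = ip x y := rfl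

def weylGroup (δ : ℕ) : Subgroup (Cls δ ≃ₗ[ℤ] Cls δ) where
  carrier := {g | IsWeyl g}
  mul_mem' {g h} hg hh := ⟨fun x y => (hg.1 _ _).trans (hh.1 x y), by simp [hh.2, hg.2]⟩
  one_mem' := ⟨fun _ _ => rfl, rfl⟩
  inv_mem' {g} hg :=
    ⟨fun x y => by simpa using (hg.1 (g⁻¹ x) (g⁻¹ y)).symm, g.symm_apply_eq.mpr hg.2.symm⟩

def reflection (α : Cls δ) (hα : ip α α = -2) : Cls δ ≃ₗ[ℤ] Cls δ :=
  Module.reflection (x := α) (f := -ipForm.flip α) (by simp [hα])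

theorem reflection_apply (α : Cls δ) (hα : ip α α = -2) (x : Cls δ) :
    reflection α hα x = x + ip x α • α := by
  simp [reflection, Module.reflection_apply]

theorem reflection_mem_weylGroup {α : Cls δ} (hα : ip α α = -2) (hK : ip (Kcls δ) α = 0) :
    reflection α hα ∈ weylGroup δ := by
  refine ⟨fun x y => ?_, by rw [reflection_apply, hK, zero_smul, add_zero]⟩
  simp only [reflection_apply, ip_add_left, ip_add_right, ip_smul_left, ip_smul_right, hα,
    ip_comm α y]
  ring

def root (i j k : Fin δ) : Cls δ := (1, Pi.single i 1 + Pi.single j 1 + Pi.single k 1)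

theorem ip_root (x : Cls δ) (i j k : Fin δ) :
    ip x (root i j k) = x.1 - (x.2 i + x.2 j + x.2 k) := by
  simp [ip, root, mul_add, Finset.sum_add_distrib, Pi.single_apply]

theorem ip_root_self {i j k : Fin δ} (hij : i ≠ j) (hik : i ≠ k) (hjk : j ≠ k) :
    ip (root i j k) (root i j k) = -2 := by
  rw [ip_root]
  simp [root, hij, hik, hjk, hij.symm, hik.symm, hjk.symm]

theorem ip_kcls_root (i j k : Fin δ) : ip (Kcls δ) (root i j k) = 0 := by
  rw [ip_root]
  simp [Kcls]

def permEquiv (σ : Equiv.Perm (Fin δ)) : Cls δ ≃ₗ[ℤ] Cls δ :=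
  (LinearEquiv.refl ℤ ℤ).prodCongr (LinearEquiv.funCongrLeft ℤ ℤ σ)

theorem permEquiv_apply (σ : Equiv.Perm (Fin δ)) (x : Cls δ) :
    permEquiv σ x = (x.1, x.2 ∘ σ) := rfl

theorem permEquiv_mem_weylGroup (σ : Equiv.Perm (Fin δ)) : permEquiv σ ∈ weylGroup δ :=
  ⟨fun x y => by simp only [permEquiv_apply, ip, Function.comp_apply, Equiv.sum_comp σ
    (fun l => x.2 l * y.2 l)], rfl⟩

theorem permEquiv_swap_apply_single (i j : Fin δ) :
    permEquiv (Equiv.swap i j) (1, Pi.single i 1) = (1, Pi.single j 1) := by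
  rw [permEquiv_apply, Pi.single_comp_equiv, Equiv.symm_swap, Equiv.swap_apply_left]

theorem isConic_iff (Q : Cls δ) :
    IsConic Q ↔ ∑ i, Q.2 i ^ 2 = Q.1 ^ 2 ∧ ∑ i, Q.2 i = 3 * Q.1 - 2 := by
  simp only [IsConic, ip, Kcls, neg_one_mul, Finset.sum_neg_distrib, ← sq]
  constructor <;> rintro ⟨h₁, h₂⟩ <;> constructor <;> linarith

end DelPezzo

namespace IsConic

open DelPezzo

variable {δ : ℕ}

theorem map {g : Cls δ ≃ₗ[ℤ] Cls δ} {Q : Cls δ} (hg : g ∈ weylGroup δ) (hQ : IsConic Q) :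
    IsConic (g Q) := by
  obtain ⟨hip, hK⟩ := hg
  refine ⟨(hip Q Q).trans hQ.1, ?_⟩
  rw [← hK, hip]
  exact hQ.2

theorem sq_le {Q : Cls δ} (hQ : IsConic Q) : (3 * Q.1 - 2) ^ 2 ≤ δ * Q.1 ^ 2 := by
  obtain ⟨hq, hs⟩ := (isConic_iff Q).1 hQ
  simpa [hq, hs] using sq_sum_le_card_mul_sum_sq (s := Finset.univ) (f := Q.2)

theorem one_le_fst (h8 : δ ≤ 8) {Q : Cls δ} (hQ : IsConic Q) : 1 ≤ Q.1 := by
  have : (δ : ℤ) ≤ 8 := by exact_mod_cast h8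
  nlinarith [hQ.sq_le, sq_nonneg Q.1]

theorem exists_snd_eq_single {Q : Cls δ} (hQ : IsConic Q) (ha : Q.1 = 1) :
    ∃ i, Q.2 = Pi.single i 1 := by
  obtain ⟨hq, hs⟩ := (isConic_iff Q).1 hQ
  rw [ha] at hq hs
  have hbool : ∀ l, Q.2 l = 0 ∨ Q.2 l = 1 := by
    have hzero : ∑ l, (Q.2 l ^ 2 - Q.2 l) = 0 := by simp [Finset.sum_sub_distrib, hq, hs]
    intro l
    have := (Finset.sum_eq_zero_iff_of_nonneg fun l _ => ?_).1 hzero l (Finset.mem_univ l)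
    · rcases le_or_gt (Q.2 l) 0 with h | h <;> [left; right] <;> nlinarith
    · nlinarith [sq_nonneg (Q.2 l)]
  obtain ⟨i, -, hi⟩ := Finset.exists_ne_zero_of_sum_ne_zero (hs.trans_ne (by norm_num))
  have hi : Q.2 i = 1 := (hbool i).resolve_left hi
  refine ⟨i, funext fun l => ?_⟩
  rcases eq_or_ne l i with rfl | hl
  · simp [hi]
  · have := Finset.add_le_sum (f := Q.2) (fun l _ => by rcases hbool l with h | h <;> omega)
      (Finset.mem_univ i) (Finset.mem_univ l) hl.symm
    rw [Pi.single_eq_of_ne hl]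
    have := hbool l
    omega

theorem not_forall_snd_mem_Icc {Q : Cls δ} (hQ : IsConic Q) {m : ℤ} (hm : 1 ≤ m)
    (ha : 3 * m ≤ Q.1) : ¬ ∀ l, Q.2 l ∈ Set.Icc 0 m := by
  intro hb
  obtain ⟨hq, hs⟩ := (isConic_iff Q).1 hQ
  have : Q.1 ^ 2 ≤ m * (3 * Q.1 - 2) := by
    rw [← hq, ← hs, Finset.mul_sum]
    exact Finset.sum_le_sum fun l _ => by nlinarith [(hb l).1, (hb l).2]
  nlinarith

theorem exists_fst_lt_add_add (h8 : δ ≤ 8) {Q : Cls δ} (hQ : IsConic Q) (ha : 2 ≤ Q.1) :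
    ∃ i j k, i ≠ j ∧ i ≠ k ∧ j ≠ k ∧ Q.1 < Q.2 i + Q.2 j + Q.2 k := by
  obtain ⟨a, b⟩ := Q
  have hs := ((isConic_iff _).1 hQ).2
  dsimp only at ha hs ⊢
  have h3 : 3 ≤ δ := by
    by_contra! h
    have : (δ : ℤ) ≤ 2 := by exact_mod_cast (by omega : δ ≤ 2)
    nlinarith [hQ.sq_le]
  obtain ⟨i, j, k, hij, hik, hjk, hji, hkj, hrest⟩ :=
    Fintype.exists_three_largest b (by simpa using h3)
  refine ⟨i, j, k, hij, hik, hjk, ?_⟩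
  by_contra! hle
  set m := b k
  have hdefect : ∑ l, (m - b l) = δ * m - (3 * a - 2) := by
    simp [Finset.sum_sub_distrib, hs]
  have hbelow : 2 * m - b i - b j ≤ δ * m - (3 * a - 2) := calc
    2 * m - b i - b j = ∑ l ∈ {i, j, k}, (m - b l) := by simp [hij, hik, hjk]; ring
    _ ≤ ∑ l, (m - b l) :=
      Finset.sum_le_sum_of_subset_of_nonneg (Finset.subset_univ _) fun l _ hl => by
        simp only [Finset.mem_insert, Finset.mem_singleton, not_or] at hl
        linarith [hrest l hl.1 hl.2.1 hl.2.2]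
    _ = δ * m - (3 * a - 2) := hdefect
  have hm : 1 ≤ m := by
    by_contra! hm
    nlinarith [mul_le_mul_of_nonpos_right (show (3 : ℤ) ≤ δ by exact_mod_cast h3)
      (by omega : m ≤ 0)]
  have h8m : (δ : ℤ) * m ≤ 8 * m := mul_le_mul_of_nonneg_right (by exact_mod_cast h8) (by omega)
  -- The linear constraints leave only `(a, m) = (3, 1)` or `(6, 2)`, with `b i = b j = m`.
  have hle_m : ∀ l, b l ≤ m := by
    generalize (δ : ℤ) * m = t at hbelow h8m
    intro l
    by_cases hl : l = i ∨ l = j ∨ l = k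
    · rcases hl with rfl | rfl | rfl <;> omega
    · push Not at hl
      exact hrest l hl.1 hl.2.1 hl.2.2
  refine hQ.not_forall_snd_mem_Icc hm (by omega) fun l => ⟨?_, hle_m l⟩
  have hl := Finset.single_le_sum (f := fun l => m - b l) (fun l _ => sub_nonneg.2 (hle_m l))
    (Finset.mem_univ l)
  rw [hdefect] at hl
  generalize (δ : ℤ) * m = t at hbelow h8m hl
  dsimp only at hl ⊢
  omega

theorem exists_mem_weylGroup_apply_eq_single (h8 : δ ≤ 8) {Q : Cls δ} (hQ : IsConic Q) :
    ∃ g ∈ weylGroup δ, ∃ i, g Q = (1, Pi.single i 1) := by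
  rcases (hQ.one_le_fst h8).eq_or_lt with ha | ha
  · obtain ⟨i, hi⟩ := hQ.exists_snd_eq_single ha.symm
    exact ⟨1, one_mem _, i, Prod.ext ha.symm hi⟩
  · obtain ⟨i, j, k, hij, hik, hjk, hlt⟩ := hQ.exists_fst_lt_add_add h8 ha
    have hr := reflection_mem_weylGroup (ip_root_self hij hik hjk) (ip_kcls_root i j k)
    have hdeg : (reflection _ (ip_root_self hij hik hjk) Q).1 < Q.1 := by
      rw [reflection_apply, ip_root]
      simp [root]
      linarith
    obtain ⟨g, hg, l, hgl⟩ := (hQ.map hr).exists_mem_weylGroup_apply_eq_single h8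
    exact ⟨g * reflection _ _, mul_mem hg hr, l, hgl⟩
termination_by Q.1.toNat
decreasing_by
  have := (hQ.map hr).one_le_fst h8
  omega

end IsConic

theorem stmt3_general (δ : ℕ) (h2 : δ ≤ 8) (Q₁ Q₂ : Cls δ)
    (hQ₁ : IsConic Q₁) (hQ₂ : IsConic Q₂) :
    ∃ g : Cls δ ≃ₗ[ℤ] Cls δ, IsWeyl g ∧ g Q₁ = Q₂ := by
  obtain ⟨g₁, hg₁, i₁, e₁⟩ := hQ₁.exists_mem_weylGroup_apply_eq_single h2
  obtain ⟨g₂, hg₂, i₂, e₂⟩ := hQ₂.exists_mem_weylGroup_apply_eq_single h2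
  refine ⟨g₂⁻¹ * DelPezzo.permEquiv (Equiv.swap i₁ i₂) * g₁,
    mul_mem (mul_mem (inv_mem hg₂) (DelPezzo.permEquiv_mem_weylGroup _)) hg₁, ?_⟩
  rw [LinearEquiv.mul_apply, LinearEquiv.mul_apply, e₁, DelPezzo.permEquiv_swap_apply_single,
    ← e₂]
  exact g₂.symm_apply_apply Q₂

/-- For 2 ≤ δ ≤ 8, the Weyl group acts transitively on conic classes. -/
theorem stmt3 (δ : ℕ) (h1 : 2 ≤ δ) (h2 : δ ≤ 8) (Q₁ Q₂ : Cls δ)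
    (hQ₁ : IsConic Q₁) (hQ₂ : IsConic Q₂) :
    ∃ g : Cls δ ≃ₗ[ℤ] Cls δ, IsWeyl g ∧ g Q₁ = Q₂ :=
  stmt3_general δ h2 Q₁ Q₂ hQ₁ hQ₂
end

section
/- Let 2 ≤ δ ≤ 8 and set m_δ = 1, 1, 1, 2, 2, 4, 8 for δ = 2, 3, 4, 5, 6, 7, 8 respectively. Then for any two conic classes Q₁, Q₂ in the del Pezzo lattice of rank 1+δ one has 0 ≤ Q₁·Q₂ ≤ m_δ, and moreover every integer value in the interval [0, m_δ] is attained as Q₁·Q₂ for some pair of conic classes. -/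
/-- The maximal intersection number of two conic classes, as a function of δ. -/
def mBound : ℕ → ℤ
  | 2 => 1
  | 3 => 1
  | 4 => 1
  | 5 => 2
  | 6 => 2
  | 7 => 4
  | 8 => 8
  | _ => 0

lemma conic_sum {δ : ℕ} {Q : Cls δ} (hQ : IsConic Q) :
    ∑ i, Q.2 i = 3 * Q.1 - 2 := by
  have hK := hQ.2
  simp only [ip, Kcls] at hK
  have : ∑ i, (-1 : ℤ) * Q.2 i = -∑ i, Q.2 i := by
    simp [Finset.sum_neg_distrib]
  rw [this] at hK
  linarith

lemma conic_sq {δ : ℕ} {Q : Cls δ} (hQ : IsConic Q) :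
    ∑ i, Q.2 i ^ 2 = Q.1 ^ 2 := by
  have h0 := hQ.1
  simp only [ip] at h0
  have : ∑ i, Q.2 i * Q.2 i = ∑ i, Q.2 i ^ 2 := by simp [sq]
  rw [this] at h0
  nlinarith [h0]

lemma conic_a_pos {δ : ℕ} (hδ : δ ≤ 8) {Q : Cls δ} (hQ : IsConic Q) : 1 ≤ Q.1 := by
  have hs := conic_sum hQ
  have hn := conic_sq hQ
  have cs := Finset.sum_mul_sq_le_sq_mul_sq Finset.univ Q.2 (fun _ => (1:ℤ))
  simp only [mul_one, one_pow, Finset.sum_const, Finset.card_univ, Fintype.card_fin,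
    nsmul_eq_mul] at cs
  rw [hs, hn] at cs
  have hδ' : (δ : ℤ) ≤ 8 := by exact_mod_cast hδ
  nlinarith [sq_nonneg Q.1, cs]

lemma hodge_aux (δ d nn : ℤ) (h9 : 0 ≤ 9 - δ) (h1 : 1 ≤ δ) (hcs : (3*d-4)^2 ≤ nn*δ) :
    (9-δ)*(d^2-nn) ≤ 16 := by
  nlinarith [sq_nonneg (δ*d - 9*d + 12),
    mul_nonneg h9 (by linarith : 0 ≤ nn*δ - (3*d-4)^2), h1, sq_nonneg (d-2)]

lemma conic_bound {δ : ℕ} (h1 : 2 ≤ δ) (h2 : δ ≤ 8) {Q₁ Q₂ : Cls δ}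
    (hQ₁ : IsConic Q₁) (hQ₂ : IsConic Q₂) :
    0 ≤ ip Q₁ Q₂ ∧ (9 - (δ:ℤ)) * (2 * ip Q₁ Q₂) ≤ 16 := by
  have ha₁ := conic_a_pos h2 hQ₁
  have ha₂ := conic_a_pos h2 hQ₂
  have hn₁ := conic_sq hQ₁
  have hn₂ := conic_sq hQ₂
  have hs₁ := conic_sum hQ₁
  have hs₂ := conic_sum hQ₂
  have cs := Finset.sum_mul_sq_le_sq_mul_sq Finset.univ Q₁.2 Q₂.2
  rw [hn₁, hn₂] at cs
  have hp : (0:ℤ) < Q₁.1 * Q₂.1 := mul_pos (by linarith) (by linarith)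
  constructor
  · simp only [ip]
    nlinarith [cs, hp]
  · -- Hodge index argument on D = Q₁ + Q₂
    set d : ℤ := Q₁.1 + Q₂.1 with hd
    set s : ℤ := ∑ i, (Q₁.2 i + Q₂.2 i) with hsdef
    set nn : ℤ := ∑ i, (Q₁.2 i + Q₂.2 i) ^ 2 with hnn
    have hs : s = 3 * d - 4 := by
      rw [hsdef, Finset.sum_add_distrib, hs₁, hs₂]; ring
    have hcs2 := Finset.sum_mul_sq_le_sq_mul_sq Finset.univ
      (fun i => Q₁.2 i + Q₂.2 i) (fun _ => (1:ℤ))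
    simp only [mul_one, one_pow, Finset.sum_const, Finset.card_univ, Fintype.card_fin,
      nsmul_eq_mul] at hcs2
    rw [← hsdef, ← hnn] at hcs2
    have hD : d ^ 2 - nn = 2 * ip Q₁ Q₂ := by
      have expand : nn = ∑ i, Q₁.2 i ^ 2 + 2 * ∑ i, Q₁.2 i * Q₂.2 i + ∑ i, Q₂.2 i ^ 2 := by
        rw [hnn]
        simp_rw [add_sq, mul_assoc]
        rw [Finset.sum_add_distrib, Finset.sum_add_distrib, ← Finset.mul_sum]
      rw [expand, hn₁, hn₂]
      simp only [ip, hd]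
      ring
    have h9 : (0:ℤ) ≤ 9 - δ := by
      have : (δ : ℤ) ≤ 8 := by exact_mod_cast h2
      linarith
    have hδpos : (1:ℤ) ≤ δ := by exact_mod_cast h1.trans' (by norm_num)
    rw [hs] at hcs2
    have key := hodge_aux (δ:ℤ) d nn h9 hδpos hcs2
    rw [← hD]
    exact key

/-- For 2 ≤ δ ≤ 8, the intersection of two conic classes lies in [0, m_δ], and
every value in that interval is attained. -/
theorem stmt4 (δ : ℕ) (h1 : 2 ≤ δ) (h2 : δ ≤ 8) :
    (∀ Q₁ Q₂ : Cls δ, IsConic Q₁ → IsConic Q₂ →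
      0 ≤ ip Q₁ Q₂ ∧ ip Q₁ Q₂ ≤ mBound δ) ∧
    (∀ k : ℤ, 0 ≤ k → k ≤ mBound δ →
      ∃ Q₁ Q₂ : Cls δ, IsConic Q₁ ∧ IsConic Q₂ ∧ ip Q₁ Q₂ = k) := by
  refine ⟨fun Q₁ Q₂ hQ₁ hQ₂ => ?_, fun k hk0 hk1 => ?_⟩
  · obtain ⟨hb1, hb2⟩ := conic_bound h1 h2 hQ₁ hQ₂
    refine ⟨hb1, ?_⟩
    interval_cases δ <;> norm_num [mBound] at hb2 ⊢ <;> omega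
  · interval_cases δ <;> norm_num [mBound] at hk1 <;> interval_cases k
    · exact ⟨((1:ℤ), ![1,0]), ((1:ℤ), ![1,0]), ⟨by decide, by decide⟩, ⟨by decide, by decide⟩, by decide⟩
    · exact ⟨((1:ℤ), ![1,0]), ((1:ℤ), ![0,1]), ⟨by decide, by decide⟩, ⟨by decide, by decide⟩, by decide⟩
    · exact ⟨((1:ℤ), ![1,0,0]), ((1:ℤ), ![1,0,0]), ⟨by decide, by decide⟩, ⟨by decide, by decide⟩, by decide⟩
    · exact ⟨((1:ℤ), ![1,0,0]), ((1:ℤ), ![0,1,0]), ⟨by decide, by decide⟩, ⟨by decide, by decide⟩, by decide⟩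
    · exact ⟨((1:ℤ), ![1,0,0,0]), ((1:ℤ), ![1,0,0,0]), ⟨by decide, by decide⟩, ⟨by decide, by decide⟩, by decide⟩
    · exact ⟨((1:ℤ), ![1,0,0,0]), ((1:ℤ), ![0,1,0,0]), ⟨by decide, by decide⟩, ⟨by decide, by decide⟩, by decide⟩
    · exact ⟨((1:ℤ), ![1,0,0,0,0]), ((1:ℤ), ![1,0,0,0,0]), ⟨by decide, by decide⟩, ⟨by decide, by decide⟩, by decide⟩
    · exact ⟨((1:ℤ), ![1,0,0,0,0]), ((1:ℤ), ![0,1,0,0,0]), ⟨by decide, by decide⟩, ⟨by decide, by decide⟩, by decide⟩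
    · exact ⟨((1:ℤ), ![1,0,0,0,0]), ((2:ℤ), ![0,1,1,1,1]), ⟨by decide, by decide⟩, ⟨by decide, by decide⟩, by decide⟩
    · exact ⟨((1:ℤ), ![1,0,0,0,0,0]), ((1:ℤ), ![1,0,0,0,0,0]), ⟨by decide, by decide⟩, ⟨by decide, by decide⟩, by decide⟩
    · exact ⟨((1:ℤ), ![1,0,0,0,0,0]), ((1:ℤ), ![0,1,0,0,0,0]), ⟨by decide, by decide⟩, ⟨by decide, by decide⟩, by decide⟩
    · exact ⟨((1:ℤ), ![1,0,0,0,0,0]), ((2:ℤ), ![0,1,1,1,1,0]), ⟨by decide, by decide⟩, ⟨by decide, by decide⟩, by decide⟩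
    · exact ⟨((1:ℤ), ![1,0,0,0,0,0,0]), ((1:ℤ), ![1,0,0,0,0,0,0]), ⟨by decide, by decide⟩, ⟨by decide, by decide⟩, by decide⟩
    · exact ⟨((1:ℤ), ![1,0,0,0,0,0,0]), ((1:ℤ), ![0,1,0,0,0,0,0]), ⟨by decide, by decide⟩, ⟨by decide, by decide⟩, by decide⟩
    · exact ⟨((1:ℤ), ![1,0,0,0,0,0,0]), ((2:ℤ), ![0,1,1,1,1,0,0]), ⟨by decide, by decide⟩, ⟨by decide, by decide⟩, by decide⟩
    · exact ⟨((1:ℤ), ![1,0,0,0,0,0,0]), ((4:ℤ), ![1,2,2,2,1,1,1]), ⟨by decide, by decide⟩, ⟨by decide, by decide⟩, by decide⟩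
    · exact ⟨((2:ℤ), ![1,1,1,1,0,0,0]), ((4:ℤ), ![1,1,1,1,2,2,2]), ⟨by decide, by decide⟩, ⟨by decide, by decide⟩, by decide⟩
    · exact ⟨((1:ℤ), ![1,0,0,0,0,0,0,0]), ((1:ℤ), ![1,0,0,0,0,0,0,0]), ⟨by decide, by decide⟩, ⟨by decide, by decide⟩, by decide⟩
    · exact ⟨((1:ℤ), ![1,0,0,0,0,0,0,0]), ((1:ℤ), ![0,1,0,0,0,0,0,0]), ⟨by decide, by decide⟩, ⟨by decide, by decide⟩, by decide⟩
    · exact ⟨((1:ℤ), ![1,0,0,0,0,0,0,0]), ((2:ℤ), ![0,1,1,1,1,0,0,0]), ⟨by decide, by decide⟩, ⟨by decide, by decide⟩, by decide⟩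
    · exact ⟨((1:ℤ), ![1,0,0,0,0,0,0,0]), ((4:ℤ), ![1,2,2,2,1,1,1,0]), ⟨by decide, by decide⟩, ⟨by decide, by decide⟩, by decide⟩
    · exact ⟨((2:ℤ), ![1,1,1,1,0,0,0,0]), ((4:ℤ), ![1,1,1,1,2,2,2,0]), ⟨by decide, by decide⟩, ⟨by decide, by decide⟩, by decide⟩
    · exact ⟨((1:ℤ), ![1,0,0,0,0,0,0,0]), ((6:ℤ), ![1,3,3,2,2,2,2,1]), ⟨by decide, by decide⟩, ⟨by decide, by decide⟩, by decide⟩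
    · exact ⟨((1:ℤ), ![1,0,0,0,0,0,0,0]), ((7:ℤ), ![1,3,3,3,3,2,2,2]), ⟨by decide, by decide⟩, ⟨by decide, by decide⟩, by decide⟩
    · exact ⟨((1:ℤ), ![1,0,0,0,0,0,0,0]), ((8:ℤ), ![1,3,3,3,3,3,3,3]), ⟨by decide, by decide⟩, ⟨by decide, by decide⟩, by decide⟩
    · exact ⟨((1:ℤ), ![1,0,0,0,0,0,0,0]), ((11:ℤ), ![3,4,4,4,4,4,4,4]), ⟨by decide, by decide⟩, ⟨by decide, by decide⟩, by decide⟩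
end

section
/- Let 2 ≤ δ ≤ 7. If (Q₁, Q₂) and (Q₁′, Q₂′) are ordered pairs of conic classes in the del Pezzo lattice of rank 1+δ with Q₁·Q₂ = Q₁′·Q₂′, then there exists an element g of the Weyl group W_δ with g(Q₁) = Q₁′ and g(Q₂) = Q₂′; that is, the intersection product determines the W_δ-orbit of an ordered pair of conic classes. -/
/-!
For `δ ≤ 7`, Cauchy–Schwarz confines the coordinates of a conic `(a; b)` to `bᵢ ∈ {0, 1, 2}`,
so `Σ bᵢ = 3a − 2` and `Σ bᵢ² = a²` fix how many `bᵢ` take each value. Reflecting in a root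
`ℓ − eᵢ − eⱼ − eₖ` with `bᵢ + bⱼ + bₖ > a` lowers the degree; when `i` is a coordinate with
maximal `bᵢ` this is always possible unless the conic is `ℓ − eᵢ`, so every conic is
Weyl-equivalent to `ℓ − e₀`. The reflections in `ℓ − e₀ − eᵢ − eⱼ` fix `ℓ − e₀`, and descending
with them brings the second conic into one of five reduced shapes, distinguished by its
product with `ℓ − e₀`; two reduced conics of the same shape differ by a permutation of the
points other than `p₀`.
-/

section

open Finset Matrix

variable {δ : ℕ}

lemma ip_eq_dotProduct (x y : Cls δ) : ip x y = x.1 * y.1 - x.2 ⬝ᵥ y.2 := rfl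

lemma ip_comm (x y : Cls δ) : ip x y = ip y x := by
  simp only [ip_eq_dotProduct, mul_comm, dotProduct_comm]

lemma ip_add_left (x y z : Cls δ) : ip (x + y) z = ip x z + ip y z := by
  simp only [ip_eq_dotProduct, Prod.fst_add, Prod.snd_add, add_dotProduct]
  ring

lemma ip_smul_left (c : ℤ) (x y : Cls δ) : ip (c • x) y = c * ip x y := by
  simp only [ip_eq_dotProduct, Prod.smul_fst, Prod.smul_snd, smul_dotProduct, smul_eq_mul]
  ring

lemma ip_add_right (x y z : Cls δ) : ip x (y + z) = ip x y + ip x z := by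
  rw [ip_comm, ip_add_left, ip_comm y, ip_comm z]

lemma ip_smul_right (c : ℤ) (x y : Cls δ) : ip x (c • y) = c * ip x y := by
  rw [ip_comm, ip_smul_left, ip_comm]

def weylGroup (δ : ℕ) : Subgroup (Cls δ ≃ₗ[ℤ] Cls δ) where
  carrier := {g | IsWeyl g}
  mul_mem' {g h} hg hh :=
    ⟨fun x y => by simp only [LinearEquiv.mul_apply, hg.1, hh.1],
      by simp only [LinearEquiv.mul_apply, hh.2, hg.2]⟩
  one_mem' := ⟨fun _ _ => rfl, rfl⟩
  inv_mem' {g} hg :=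
    ⟨fun x y => by rw [← hg.1, LinearEquiv.coe_inv, g.apply_symm_apply, g.apply_symm_apply],
      by rw [LinearEquiv.coe_inv, LinearEquiv.symm_apply_eq, hg.2]⟩

lemma IsConic.map_s5 {g : Cls δ ≃ₗ[ℤ] Cls δ} (hg : g ∈ weylGroup δ) {Q : Cls δ}
    (hQ : IsConic Q) : IsConic (g Q) :=
  ⟨by rw [hg.1, hQ.1], by rw [← hg.2, hg.1, hQ.2]⟩

def reflection (r : Cls δ) (hr : ip r r = -2) : Cls δ ≃ₗ[ℤ] Cls δ where
  toFun x := x + ip x r • r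
  invFun x := x + ip x r • r
  map_add' x y := by simp only [ip_add_left, add_smul]; abel
  map_smul' c x := by simp only [ip_smul_left, mul_smul, smul_add, RingHom.id_apply]
  left_inv x := by simp only [ip_add_left, ip_smul_left, hr]; module
  right_inv x := by simp only [ip_add_left, ip_smul_left, hr]; module

lemma reflection_apply (r : Cls δ) (hr : ip r r = -2) (x : Cls δ) :
    reflection r hr x = x + ip x r • r := rfl

lemma reflection_mem_weylGroup {r : Cls δ} (hr : ip r r = -2) (hK : ip (Kcls δ) r = 0) :
    reflection r hr ∈ weylGroup δ := by
  refine ⟨fun x y => ?_, ?_⟩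
  · simp only [reflection_apply, ip_add_left, ip_add_right, ip_smul_left, ip_smul_right, hr,
      ip_comm r y]
    ring
  · rw [reflection_apply, hK, zero_smul, add_zero]

/-- Relabelling the blown-up points by `σ`. -/
def permLattice (σ : Equiv.Perm (Fin δ)) : Cls δ ≃ₗ[ℤ] Cls δ :=
  (LinearEquiv.refl ℤ ℤ).prodCongr (LinearEquiv.funCongrLeft ℤ ℤ σ)

lemma permLattice_apply (σ : Equiv.Perm (Fin δ)) (x : Cls δ) :
    permLattice σ x = (x.1, x.2 ∘ σ) := rfl

lemma permLattice_mem_weylGroup (σ : Equiv.Perm (Fin δ)) : permLattice σ ∈ weylGroup δ :=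
  ⟨fun x y => by
    simp only [ip, permLattice_apply, Function.comp_apply,
      Equiv.sum_comp σ (fun i => x.2 i * y.2 i)],
    rfl⟩

/-- The conic class `ℓ − eᵢ`. -/
def stdConic (i : Fin δ) : Cls δ := (1, Pi.single i 1)

lemma ip_stdConic (i : Fin δ) (Q : Cls δ) : ip (stdConic i) Q = Q.1 - Q.2 i := by
  simp [ip_eq_dotProduct, stdConic, single_dotProduct]

lemma permLattice_stdConic (σ : Equiv.Perm (Fin δ)) (i : Fin δ) :
    permLattice σ (stdConic i) = stdConic (σ.symm i) := by
  refine Prod.ext rfl (funext fun m => ?_)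
  simp [permLattice_apply, stdConic, Pi.single_apply, Equiv.eq_symm_apply]

/-- The root `ℓ − eᵢ − eⱼ − eₖ`. -/
def tripleRoot (i j k : Fin δ) : Cls δ := (1, Pi.single i 1 + Pi.single j 1 + Pi.single k 1)

lemma ip_tripleRoot (Q : Cls δ) (i j k : Fin δ) :
    ip Q (tripleRoot i j k) = Q.1 - (Q.2 i + Q.2 j + Q.2 k) := by
  simp [ip_eq_dotProduct, tripleRoot, dotProduct_add, dotProduct_single]

lemma ip_tripleRoot_self {i j k : Fin δ} (hij : i ≠ j) (hik : i ≠ k) (hjk : j ≠ k) :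
    ip (tripleRoot i j k) (tripleRoot i j k) = -2 := by
  rw [ip_tripleRoot]
  simp [tripleRoot, hij, hik, hjk, hij.symm, hik.symm, hjk.symm]

lemma ip_K_tripleRoot (i j k : Fin δ) : ip (Kcls δ) (tripleRoot i j k) = 0 := by
  simp [ip_tripleRoot, Kcls]

lemma IsConic.sum_eq {Q : Cls δ} (hQ : IsConic Q) : ∑ i, Q.2 i = 3 * Q.1 - 2 := by
  have h := hQ.2
  simp only [ip, Kcls, neg_one_mul, sum_neg_distrib] at h
  linarith

lemma IsConic.sum_sq_eq {Q : Cls δ} (hQ : IsConic Q) : ∑ i, Q.2 i ^ 2 = Q.1 ^ 2 := by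
  have h := hQ.1
  simp only [ip, ← sq] at h
  linarith

lemma IsConic.coord_mem_Icc (hδ : δ ≤ 7) {Q : Cls δ} (hQ : IsConic Q) (i : Fin δ) :
    Q.2 i ∈ Icc 0 2 := by
  have hi : i ∈ (univ : Finset (Fin δ)) := mem_univ i
  have hcs := sq_sum_le_card_mul_sum_sq (s := univ.erase i) (f := Q.2)
  rw [sum_erase_eq_sub hi, sum_erase_eq_sub hi, hQ.sum_eq, hQ.sum_sq_eq,
    card_erase_of_mem hi, card_univ, Fintype.card_fin] at hcs
  have hrest : 0 ≤ Q.1 ^ 2 - Q.2 i ^ 2 := by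
    rw [← hQ.sum_sq_eq, ← sum_erase_eq_sub hi]
    exact sum_nonneg fun _ _ => sq_nonneg _
  have hcard : ((δ - 1 : ℕ) : ℤ) ≤ 6 := by omega
  have hcs6 := hcs.trans (mul_le_mul_of_nonneg_right hcard hrest)
  rw [mem_Icc]
  constructor
  · nlinarith [sq_nonneg (Q.1 - 1), sq_nonneg (Q.2 i + 1)]
  · nlinarith [sq_nonneg (Q.1 - 5), sq_nonneg (Q.2 i - 2)]

lemma IsConic.one_le_fst_s5 (hδ : δ ≤ 7) {Q : Cls δ} (hQ : IsConic Q) : 1 ≤ Q.1 := by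
  have : 0 ≤ ∑ i, Q.2 i := sum_nonneg fun i _ => (mem_Icc.1 (hQ.coord_mem_Icc hδ i)).1
  rw [hQ.sum_eq] at this
  omega

lemma sum_comp_eq_of_mem_Icc {ι : Type*} (s : Finset ι) (b : ι → ℤ)
    (hb : ∀ i ∈ s, b i ∈ Icc 0 2) (f : ℤ → ℤ) :
    ∑ i ∈ s, f (b i) =
      #{i ∈ s | b i = 0} * f 0 + #{i ∈ s | b i = 1} * f 1 + #{i ∈ s | b i = 2} * f 2 := by
  rw [← sum_fiberwise_of_maps_to' hb, show Icc (0 : ℤ) 2 = {0, 1, 2} by rfl]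
  simp [sum_const, add_assoc]

/-- No reflection in a root `ℓ − e_{i₀} − eᵢ − eⱼ` lowers the degree of `Q`. -/
def IsReducedAt (i₀ : Fin δ) (Q : Cls δ) : Prop :=
  ∀ i j, i ≠ j → i ≠ i₀ → j ≠ i₀ → Q.2 i₀ + Q.2 i + Q.2 j ≤ Q.1

lemma exists_lower_of_not_isReducedAt {i₀ : Fin δ} {Q : Cls δ} (h : ¬ IsReducedAt i₀ Q) :
    ∃ g ∈ weylGroup δ, g (stdConic i₀) = stdConic i₀ ∧ (g Q).1 < Q.1 := by
  simp only [IsReducedAt, not_forall, not_le] at h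
  obtain ⟨i, j, hij, hi, hj, hlt⟩ := h
  have hr := ip_tripleRoot_self hi.symm hj.symm hij
  refine ⟨reflection _ hr, reflection_mem_weylGroup hr (ip_K_tripleRoot _ _ _), ?_, ?_⟩
  · rw [reflection_apply, ip_tripleRoot]
    simp [stdConic, hi, hj]
  · rw [reflection_apply, ip_tripleRoot]
    simp only [tripleRoot, Prod.fst_add, Prod.smul_fst, smul_eq_mul, mul_one]
    linarith

lemma IsReducedAt.shape (hδ : δ ≤ 7) {i₀ : Fin δ} {Q : Cls δ} (hQ : IsConic Q)
    (h : IsReducedAt i₀ Q) :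
    (Q.1 = 1 ∧ Q.2 i₀ = 1) ∨ (Q.1 = 1 ∧ Q.2 i₀ = 0) ∨ (Q.1 = 2 ∧ Q.2 i₀ = 0) ∨
      (Q.1 = 3 ∧ Q.2 i₀ = 0) ∨ (Q.1 = 5 ∧ Q.2 i₀ = 1) := by
  have hi₀ := mem_univ i₀
  have hb : ∀ i ∈ univ.erase i₀, Q.2 i ∈ Icc 0 2 := fun i _ => hQ.coord_mem_Icc hδ i
  have hcard := sum_comp_eq_of_mem_Icc _ Q.2 hb 1
  have hsum := sum_comp_eq_of_mem_Icc _ Q.2 hb id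
  have hsq := sum_comp_eq_of_mem_Icc _ Q.2 hb (· ^ 2)
  simp only [Pi.one_apply, sum_const, nsmul_eq_mul, mul_one, card_erase_of_mem hi₀,
    card_univ, Fintype.card_fin] at hcard
  simp only [id, sum_erase_eq_sub hi₀, hQ.sum_eq] at hsum
  simp only [sum_erase_eq_sub hi₀, hQ.sum_sq_eq] at hsq
  have pair : ∀ i ∈ univ.erase i₀, ∀ j ∈ univ.erase i₀, i ≠ j →
      Q.2 i₀ + Q.2 i + Q.2 j ≤ Q.1 :=
    fun i hi j hj hij => h i j hij (ne_of_mem_erase hi) (ne_of_mem_erase hj)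
  have two : ∀ v, 1 < #{i ∈ univ.erase i₀ | Q.2 i = v} → Q.2 i₀ + 2 * v ≤ Q.1 := by
    intro v hv
    obtain ⟨i, hi, j, hj, hij⟩ := one_lt_card.1 hv
    rw [mem_filter] at hi hj
    linarith [pair i hi.1 j hj.1 hij]
  have mixed : 0 < #{i ∈ univ.erase i₀ | Q.2 i = 1} → 0 < #{i ∈ univ.erase i₀ | Q.2 i = 2} →
      Q.2 i₀ + 3 ≤ Q.1 := by
    intro h1 h2
    obtain ⟨i, hi⟩ := card_pos.1 h1
    obtain ⟨j, hj⟩ := card_pos.1 h2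
    rw [mem_filter] at hi hj
    have hij : i ≠ j := fun e => by rw [e, hj.2] at hi; omega
    linarith [pair i hi.1 j hj.1 hij]
  have two₁ := two 1
  have two₂ := two 2
  obtain ⟨hb₀, hb₂⟩ := mem_Icc.1 (hQ.coord_mem_Icc hδ i₀)
  have ha₁ := hQ.one_le_fst_s5 hδ
  have ha₅ : Q.1 ≤ 5 := by nlinarith
  generalize Q.1 = a at *
  generalize Q.2 i₀ = b at *
  interval_cases a <;> interval_cases b <;> omega

lemma IsReducedAt.eq_stdConic (hδ : δ ≤ 7) {i₀ : Fin δ} {Q : Cls δ} (hQ : IsConic Q)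
    (h : IsReducedAt i₀ Q) (hmax : ∀ i, Q.2 i ≤ Q.2 i₀) : Q = stdConic i₀ := by
  have hb := fun i => mem_Icc.1 (hQ.coord_mem_Icc hδ i)
  have hpos : Q.2 i₀ ≠ 0 := fun h0 => by
    have : ∑ i, Q.2 i ≤ 0 := sum_nonpos fun i _ => h0 ▸ hmax i
    linarith [hQ.sum_eq, hQ.one_le_fst_s5 hδ]
  have hsq : Q.2 i₀ = 1 → Q.1 ^ 2 ≤ 3 * Q.1 - 2 := fun h1 => by
    rw [← hQ.sum_eq, ← hQ.sum_sq_eq]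
    exact sum_le_sum fun i _ => by nlinarith [hmax i, hb i]
  obtain ⟨ha, hb₀⟩ : Q.1 = 1 ∧ Q.2 i₀ = 1 := by
    rcases h.shape hδ hQ with hs | hs | hs | hs | hs
    · exact hs
    all_goals first | exact absurd hs.2 hpos | nlinarith [hsq hs.2]
  have hrest : ∑ i ∈ univ.erase i₀, Q.2 i = 0 := by
    rw [sum_erase_eq_sub (mem_univ _), hQ.sum_eq]
    omega
  rw [sum_eq_zero_iff_of_nonneg fun i _ => (hb i).1] at hrest
  refine Prod.ext ha (funext fun i => ?_)
  by_cases hi : i = i₀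
  · subst hi
    simp [stdConic, hb₀]
  · simp [stdConic, hi, hrest i (mem_erase.2 ⟨hi, mem_univ i⟩)]

lemma exists_mem_of_descent (hδ : δ ≤ 7) (H : Subgroup (Cls δ ≃ₗ[ℤ] Cls δ))
    (hH : H ≤ weylGroup δ) (P : Cls δ → Prop)
    (step : ∀ Q, IsConic Q → ¬ P Q → ∃ g ∈ H, (g Q).1 < Q.1) {Q : Cls δ}
    (hQ : IsConic Q) :
    ∃ g ∈ H, P (g Q) := by
  obtain ⟨n, hn⟩ : ∃ n, Q.1.toNat = n := ⟨_, rfl⟩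
  induction n using Nat.strong_induction_on generalizing Q with
  | _ n ih =>
    by_cases hP : P Q
    · exact ⟨1, H.one_mem, hP⟩
    obtain ⟨g, hg, hlt⟩ := step Q hQ hP
    have hgQ := hQ.map_s5 (hH hg)
    obtain ⟨g', hg', hP'⟩ := ih _ (by have := hgQ.one_le_fst_s5 hδ; omega) hgQ rfl
    exact ⟨g' * g, H.mul_mem hg' hg, hP'⟩

lemma exists_weyl_apply_eq_stdConic (hδ : δ ≤ 7) {Q : Cls δ} (hQ : IsConic Q) (i₀ : Fin δ) :
    ∃ g ∈ weylGroup δ, g Q = stdConic i₀ := by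
  have step : ∀ Q, IsConic Q → (¬ ∃ p, Q = stdConic p) →
      ∃ g ∈ weylGroup δ, (g Q).1 < Q.1 := by
    intro Q hQ hP
    obtain ⟨i, -, hi⟩ := exists_max_image univ Q.2 ⟨i₀, mem_univ _⟩
    obtain ⟨g, hg, -, hlt⟩ := exists_lower_of_not_isReducedAt (i₀ := i) fun hred =>
      hP ⟨i, hred.eq_stdConic hδ hQ fun j => hi j (mem_univ j)⟩
    exact ⟨g, hg, hlt⟩
  obtain ⟨g, hg, p, hp⟩ := exists_mem_of_descent hδ (weylGroup δ) le_rfl _ step hQ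
  refine ⟨permLattice (Equiv.swap i₀ p) * g, mul_mem (permLattice_mem_weylGroup _) hg, ?_⟩
  rw [LinearEquiv.mul_apply, hp, permLattice_stdConic, Equiv.symm_swap, Equiv.swap_apply_right]

lemma exists_weyl_fix_isReducedAt (hδ : δ ≤ 7) {Q : Cls δ} (hQ : IsConic Q) (i₀ : Fin δ) :
    ∃ g ∈ weylGroup δ, g (stdConic i₀) = stdConic i₀ ∧ IsReducedAt i₀ (g Q) := by
  have step : ∀ Q, IsConic Q → ¬ IsReducedAt i₀ Q →
      ∃ g ∈ weylGroup δ ⊓ MulAction.stabilizer _ (stdConic i₀), (g Q).1 < Q.1 := by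
    intro Q _ hQ
    obtain ⟨g, hg, hfix, hlt⟩ := exists_lower_of_not_isReducedAt hQ
    exact ⟨g, ⟨hg, hfix⟩, hlt⟩
  obtain ⟨g, ⟨hg, hfix⟩, hred⟩ := exists_mem_of_descent hδ _ inf_le_left _ step hQ
  exact ⟨g, hg, hfix, hred⟩

lemma exists_perm_fixing_comp_eq {α β : Type*} [Fintype α] [DecidableEq α] [DecidableEq β]
    {f g : α → β} (h : ∀ v, #{a | f a = v} = #{a | g a = v}) {x : α} (hx : f x = g x) :
    ∃ σ : Equiv.Perm α, σ x = x ∧ f ∘ σ = g := by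
  let e : ∀ v, {a // g a = v} ≃ {a // f a = v} := fun v =>
    Fintype.equivOfCardEq (by rw [Fintype.card_subtype, Fintype.card_subtype, h])
  let τ : Equiv.Perm α := Equiv.ofFiberEquiv e
  have hτ : ∀ a, f (τ a) = g a := Equiv.ofFiberEquiv_map e
  -- `τ` need not fix `x`, but `f (τ x) = f x`, so swapping `τ x` and `x` does not change `f`
  have hswap : ∀ a, f (Equiv.swap (τ x) x a) = f a := fun a => by
    rw [Equiv.swap_apply_def]
    split_ifs with h₁ h₂
    · rw [h₁, hτ, hx]
    · rw [h₂, hτ, hx]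
    · rfl
  exact ⟨τ.trans (Equiv.swap (τ x) x), Equiv.swap_apply_left _ _,
    funext fun a => (hswap (τ a)).trans (hτ a)⟩

lemma card_fiber_eq_of_fst_eq (hδ : δ ≤ 7) {Q Q' : Cls δ} (hQ : IsConic Q) (hQ' : IsConic Q')
    (ha : Q.1 = Q'.1) (v : ℤ) : #{i | Q.2 i = v} = #{i | Q'.2 i = v} := by
  have hb := fun i (_ : i ∈ univ) => hQ.coord_mem_Icc hδ i
  have hb' := fun i (_ : i ∈ univ) => hQ'.coord_mem_Icc hδ i
  by_cases hv : v ∈ Icc 0 2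
  · have hcard := sum_comp_eq_of_mem_Icc _ _ hb 1
    have hcard' := sum_comp_eq_of_mem_Icc _ _ hb' 1
    have hsum := sum_comp_eq_of_mem_Icc _ _ hb id
    have hsum' := sum_comp_eq_of_mem_Icc _ _ hb' id
    have hsq := sum_comp_eq_of_mem_Icc _ _ hb (· ^ 2)
    have hsq' := sum_comp_eq_of_mem_Icc _ _ hb' (· ^ 2)
    simp only [Pi.one_apply, sum_const, nsmul_eq_mul, mul_one] at hcard hcard'
    simp only [id, hQ.sum_eq, hQ'.sum_eq] at hsum hsum'
    simp only [hQ.sum_sq_eq, hQ'.sum_sq_eq] at hsq hsq'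
    rw [ha] at hsum hsq
    obtain ⟨hv₀, hv₂⟩ := mem_Icc.1 hv
    interval_cases v <;> omega
  · have hempty : ∀ R : Cls δ, (∀ i ∈ univ, R.2 i ∈ Icc 0 2) → #{i | R.2 i = v} = 0 :=
      fun R hR => card_eq_zero.2 (filter_eq_empty_iff.2 fun i hi e => hv (e ▸ hR i hi))
    rw [hempty Q hb, hempty Q' hb']

lemma IsReducedAt.exists_perm (hδ : δ ≤ 7) {i₀ : Fin δ} {Q Q' : Cls δ} (hQ : IsConic Q)
    (hQ' : IsConic Q') (h : IsReducedAt i₀ Q) (h' : IsReducedAt i₀ Q')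
    (hip : ip (stdConic i₀) Q = ip (stdConic i₀) Q') :
    ∃ σ : Equiv.Perm (Fin δ), σ i₀ = i₀ ∧ permLattice σ Q = Q' := by
  rw [ip_stdConic, ip_stdConic] at hip
  have hs := h.shape hδ hQ
  have hs' := h'.shape hδ hQ'
  -- `a − b_{i₀}` takes the distinct values `0, …, 4` on the five reduced shapes
  have ha : Q.1 = Q'.1 := by omega
  have hb₀ : Q.2 i₀ = Q'.2 i₀ := by omega
  obtain ⟨σ, hσ, hcomp⟩ :=
    exists_perm_fixing_comp_eq (card_fiber_eq_of_fst_eq hδ hQ hQ' ha) hb₀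
  exact ⟨σ, hσ, Prod.ext ha hcomp⟩

lemma exists_weyl_normalize (hδ : δ ≤ 7) (i₀ : Fin δ) {Q₁ Q₂ : Cls δ} (hQ₁ : IsConic Q₁)
    (hQ₂ : IsConic Q₂) :
    ∃ g ∈ weylGroup δ, g Q₁ = stdConic i₀ ∧ IsConic (g Q₂) ∧ IsReducedAt i₀ (g Q₂) := by
  obtain ⟨g₁, hg₁, e₁⟩ := exists_weyl_apply_eq_stdConic hδ hQ₁ i₀
  obtain ⟨g₂, hg₂, hfix, hred⟩ := exists_weyl_fix_isReducedAt hδ (hQ₂.map_s5 hg₁) i₀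
  exact ⟨g₂ * g₁, mul_mem hg₂ hg₁, by rw [LinearEquiv.mul_apply, e₁, hfix],
    hQ₂.map_s5 (mul_mem hg₂ hg₁), hred⟩

end

/-- For 2 ≤ δ ≤ 7, the intersection product determines the Weyl-group orbit of
an ordered pair of conic classes. -/
theorem stmt5 (δ : ℕ) (h1 : 2 ≤ δ) (h2 : δ ≤ 7)
    (Q₁ Q₂ Q₁' Q₂' : Cls δ)
    (hQ₁ : IsConic Q₁) (hQ₂ : IsConic Q₂) (hQ₁' : IsConic Q₁') (hQ₂' : IsConic Q₂')
    (h : ip Q₁ Q₂ = ip Q₁' Q₂') :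
    ∃ g : Cls δ ≃ₗ[ℤ] Cls δ, IsWeyl g ∧ g Q₁ = Q₁' ∧ g Q₂ = Q₂' := by
  let i₀ : Fin δ := ⟨0, by omega⟩
  obtain ⟨g, hg, e₁, hS, hred⟩ := exists_weyl_normalize h2 i₀ hQ₁ hQ₂
  obtain ⟨g', hg', e₁', hS', hred'⟩ := exists_weyl_normalize h2 i₀ hQ₁' hQ₂'
  rw [← hg.1 Q₁ Q₂, ← hg'.1 Q₁' Q₂', e₁, e₁'] at h
  obtain ⟨σ, hσ, hperm⟩ := hred.exists_perm h2 hS hS' hred' h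
  refine ⟨g'⁻¹ * permLattice σ * g,
    mul_mem (mul_mem (inv_mem hg') (permLattice_mem_weylGroup σ)) hg, ?_, ?_⟩
  · rw [LinearEquiv.mul_apply, LinearEquiv.mul_apply, e₁, permLattice_stdConic,
      (Equiv.symm_apply_eq σ).2 hσ.symm, ← e₁', LinearEquiv.coe_inv,
      LinearEquiv.symm_apply_apply]
  · rw [LinearEquiv.mul_apply, LinearEquiv.mul_apply, hperm, LinearEquiv.coe_inv,
      LinearEquiv.symm_apply_apply]
end

section
/- Let L, L₁, L₂ be (−1)-classes in the del Pezzo lattice of rank 9 (δ = 8) with L₁·L = L₂·L. Then there exists an element g of the Weyl group W₈ with g(L) = L and g(L₁) = L₂; that is, the stabilizer of L in W₈ acts transitively on the set of (−1)-classes having a given intersection number with L. -/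
set_option maxHeartbeats 1000000

namespace DP

variable {δ : ℕ}

/-! ### Bilinearity of the intersection form -/

lemma ip_comm (x y : Cls δ) : ip x y = ip y x := by
  simp [ip, mul_comm]

lemma ip_add_left (x y z : Cls δ) : ip (x + y) z = ip x z + ip y z := by
  simp only [ip, Prod.fst_add, Prod.snd_add, Pi.add_apply, add_mul, Finset.sum_add_distrib]
  ring

lemma ip_add_right (x y z : Cls δ) : ip x (y + z) = ip x y + ip x z := by
  rw [ip_comm, ip_add_left, ip_comm z, ip_comm y]

lemma ip_smul_left (c : ℤ) (x y : Cls δ) : ip (c • x) y = c * ip x y := by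
  simp only [ip, Prod.smul_fst, Prod.smul_snd, Pi.smul_apply, smul_eq_mul, Finset.mul_sum, mul_assoc]
  rw [← Finset.mul_sum]; ring

lemma ip_smul_right (c : ℤ) (x y : Cls δ) : ip x (c • y) = c * ip x y := by
  rw [ip_comm, ip_smul_left, ip_comm]

lemma ip_sub_left (x y z : Cls δ) : ip (x - y) z = ip x z - ip y z := by
  have h1 : x - y + y = x := by abel
  have h := ip_add_left (x - y) y z
  rw [h1] at h; omega

lemma ip_sub_right (x y z : Cls δ) : ip x (y - z) = ip x y - ip x z := by
  rw [ip_comm, ip_sub_left, ip_comm y, ip_comm z]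

/-! ### Reflections -/

/-- reflection in a root `r` (with `r·r = -2`) as a linear map. -/
def reflL (r : Cls δ) : Cls δ →ₗ[ℤ] Cls δ where
  toFun x := x + ip x r • r
  map_add' x y := by simp only [ip_add_left, add_smul]; abel
  map_smul' c x := by simp only [ip_smul_left, RingHom.id_apply, smul_eq_mul, mul_smul, smul_add]

lemma reflL_invol {r : Cls δ} (hr : ip r r = -2) : Function.Involutive (reflL r) := by
  intro x
  simp only [reflL, LinearMap.coe_mk, AddHom.coe_mk]
  rw [ip_add_left, ip_smul_left, hr]
  have h1 : x + ip x r • r + (ip x r + ip x r * -2) • r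
      = x + (ip x r + (ip x r + ip x r * -2)) • r := by
    rw [add_smul, add_smul]
    module
  rw [h1]
  have h2 : ip x r + (ip x r + ip x r * -2) = 0 := by ring
  rw [h2, zero_smul, add_zero]

/-- reflection in a root as a linear equivalence. -/
def refl (r : Cls δ) (hr : ip r r = -2) : Cls δ ≃ₗ[ℤ] Cls δ :=
  LinearEquiv.ofInvolutive (reflL r) (reflL_invol hr)

lemma refl_apply (r : Cls δ) (hr : ip r r = -2) (x : Cls δ) :
    refl r hr x = x + ip x r • r := rfl

lemma refl_isWeyl (r : Cls δ) (hr : ip r r = -2) (hK : ip (Kcls δ) r = 0) :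
    IsWeyl (refl r hr) := by
  constructor
  · intro x y
    rw [refl_apply, refl_apply, ip_add_left, ip_add_right, ip_add_right,
      ip_smul_left, ip_smul_right, ip_smul_right, ip_smul_left, hr]
    have h : ip r y = ip y r := ip_comm _ _
    rw [h]; ring
  · rw [refl_apply, hK, zero_smul, add_zero]

lemma weyl_trans {g h : Cls δ ≃ₗ[ℤ] Cls δ} (hg : IsWeyl g) (hh : IsWeyl h) :
    IsWeyl (g.trans h) := by
  constructor
  · intro x y; simp only [LinearEquiv.trans_apply]; rw [hh.1, hg.1]
  · simp only [LinearEquiv.trans_apply]; rw [hg.2, hh.2]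

lemma weyl_symm {g : Cls δ ≃ₗ[ℤ] Cls δ} (hg : IsWeyl g) : IsWeyl g.symm := by
  constructor
  · intro x y
    have h := hg.1 (g.symm x) (g.symm y)
    simpa using h.symm
  · have h := congrArg g.symm hg.2
    simpa using h.symm

lemma weyl_id : IsWeyl (LinearEquiv.refl ℤ (Cls δ)) := by
  constructor <;> simp

lemma weyl_minusOne {g : Cls δ ≃ₗ[ℤ] Cls δ} (hg : IsWeyl g) {L : Cls δ}
    (hL : IsMinusOne L) : IsMinusOne (g L) := by
  refine ⟨(hg.1 L L).trans hL.1, ?_⟩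
  rw [← hg.2, hg.1]
  exact hL.2

lemma weyl_conic {g : Cls δ ≃ₗ[ℤ] Cls δ} (hg : IsWeyl g) {Q : Cls δ}
    (hQ : IsConic Q) : IsConic (g Q) := by
  refine ⟨(hg.1 Q Q).trans hQ.1, ?_⟩
  rw [← hg.2, hg.1]
  exact hQ.2

/-! ### Concrete classes and roots -/

def E8 : Cls 8 := (0, fun i => if i = 7 then -1 else 0)
def F0 : Cls 8 := (0, fun i => if i = 0 then -1 else 0)
def Q0 : Cls 8 := (1, fun i => if i = 0 then 1 else 0)
def Rsw (i j : Fin 8) : Cls 8 := (0, fun t => if t = i then -1 else if t = j then 1 else 0)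
def R3 (i j k : Fin 8) : Cls 8 := (1, fun t => if t = i ∨ t = j ∨ t = k then 1 else 0)

lemma sum_ind (i : Fin 8) (f : Fin 8 → ℤ) :
    ∑ t, f t * (if t = i then (-1:ℤ) else 0) = - f i := by
  have h : ∀ t, f t * (if t = i then (-1:ℤ) else 0) = (if t = i then -f t else 0) := by
    intro t; by_cases h : t = i <;> simp [h]
  rw [Finset.sum_congr rfl (fun t _ => h t), Finset.sum_ite_eq']
  simp

lemma sum_ind2 (i j : Fin 8) (hij : i ≠ j) (f : Fin 8 → ℤ) :
    ∑ t, f t * (if t = i then (-1:ℤ) else if t = j then 1 else 0) = f j - f i := by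
  have h : ∀ t, f t * (if t = i then (-1:ℤ) else if t = j then 1 else 0)
      = (if t = i then -f t else 0) + (if t = j then f t else 0) := by
    intro t
    by_cases h1 : t = i
    · subst h1; simp [hij]
    · by_cases h2 : t = j
      · subst h2; simp [h1]
      · simp [h1, h2]
  rw [Finset.sum_congr rfl (fun t _ => h t), Finset.sum_add_distrib,
    Finset.sum_ite_eq', Finset.sum_ite_eq']
  simp; ring

lemma sum_ind3 (i j k : Fin 8) (hij : i ≠ j) (hik : i ≠ k) (hjk : j ≠ k) (f : Fin 8 → ℤ) :
    ∑ t, f t * (if t = i ∨ t = j ∨ t = k then (1:ℤ) else 0) = f i + f j + f k := by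
  have h : ∀ t, f t * (if t = i ∨ t = j ∨ t = k then (1:ℤ) else 0)
      = (if t = i then f t else 0) + (if t = j then f t else 0) + (if t = k then f t else 0) := by
    intro t
    by_cases h1 : t = i
    · subst h1; simp [hij, hik]
    · by_cases h2 : t = j
      · subst h2; simp [h1, hjk]
      · by_cases h3 : t = k
        · subst h3; simp [h1, h2]
        · simp [h1, h2, h3]
  rw [Finset.sum_congr rfl (fun t _ => h t), Finset.sum_add_distrib, Finset.sum_add_distrib,
    Finset.sum_ite_eq', Finset.sum_ite_eq', Finset.sum_ite_eq']
  simp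

lemma ip_E8 (x : Cls 8) : ip x E8 = x.2 7 := by
  simp only [ip, E8]
  rw [sum_ind]; ring

lemma ip_K (x : Cls 8) : ip (Kcls 8) x = -3 * x.1 + ∑ i, x.2 i := by
  simp only [ip, Kcls]
  have h : ∀ t : Fin 8, (-1 : ℤ) * x.2 t = -(x.2 t) := fun t => by ring
  rw [Finset.sum_congr rfl (fun t _ => h t), Finset.sum_neg_distrib]
  ring

lemma ip_Rsw (x : Cls 8) (i j : Fin 8) (hij : i ≠ j) :
    ip x (Rsw i j) = x.2 i - x.2 j := by
  simp only [ip, Rsw, mul_zero, zero_sub]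
  rw [sum_ind2 i j hij]
  ring

lemma ip_R3 (x : Cls 8) (i j k : Fin 8) (hij : i ≠ j) (hik : i ≠ k) (hjk : j ≠ k) :
    ip x (R3 i j k) = x.1 - (x.2 i + x.2 j + x.2 k) := by
  simp only [ip, R3, mul_one]
  rw [sum_ind3 i j k hij hik hjk]

lemma Rsw_root (i j : Fin 8) (hij : i ≠ j) : ip (Rsw i j) (Rsw i j) = -2 := by
  rw [ip_Rsw _ _ _ hij]
  simp [Rsw, hij, Ne.symm hij]

lemma Rsw_K (i j : Fin 8) (hij : i ≠ j) : ip (Kcls 8) (Rsw i j) = 0 := by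
  rw [ip_Rsw _ _ _ hij]
  simp [Kcls]

lemma R3_root (i j k : Fin 8) (hij : i ≠ j) (hik : i ≠ k) (hjk : j ≠ k) :
    ip (R3 i j k) (R3 i j k) = -2 := by
  rw [ip_R3 _ _ _ _ hij hik hjk]
  simp [R3, hij, hik, hjk]

lemma R3_K (i j k : Fin 8) (hij : i ≠ j) (hik : i ≠ k) (hjk : j ≠ k) :
    ip (Kcls 8) (R3 i j k) = 0 := by
  rw [ip_R3 _ _ _ _ hij hik hjk]
  simp [Kcls]

lemma refl_fst (r : Cls 8) (hr : ip r r = -2) (x : Cls 8) :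
    (refl r hr x).1 = x.1 + ip x r * r.1 := by
  rw [refl_apply]
  simp [Prod.smul_fst]

lemma refl_snd (r : Cls 8) (hr : ip r r = -2) (x : Cls 8) (t : Fin 8) :
    (refl r hr x).2 t = x.2 t + ip x r * r.2 t := by
  rw [refl_apply]
  simp [Prod.smul_snd]

/-! ### Arithmetic lemmas -/

lemma cs (s : Finset (Fin 8)) (b : Fin 8 → ℤ) :
    (∑ i ∈ s, b i)^2 ≤ s.card * ∑ i ∈ s, (b i)^2 := by
  have h := Finset.sum_mul_sq_le_sq_mul_sq s (fun _ => (1:ℤ)) b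
  simpa [Finset.sum_const, mul_comm] using h

lemma sq_add_self_nonneg (b : ℤ) : 0 ≤ b^2 + b := by
  have h : 0 ≤ (2*b+1)^2 := sq_nonneg _
  nlinarith

lemma sq_sub_self_nonneg (b : ℤ) : 0 ≤ b^2 - b := by
  have h : 0 ≤ (2*b-1)^2 := sq_nonneg _
  nlinarith

lemma minusOne_sums {L : Cls 8} (h : IsMinusOne L) :
    (∑ i, L.2 i) = 3*L.1 - 1 ∧ (∑ i, (L.2 i)^2) = L.1^2 + 1 := by
  have h2 := h.2
  rw [ip_K] at h2
  have h1 := h.1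
  simp only [ip] at h1
  have hsq : ∀ t : Fin 8, L.2 t * L.2 t = (L.2 t)^2 := fun t => by ring
  rw [Finset.sum_congr rfl (fun t _ => hsq t)] at h1
  constructor
  · omega
  · nlinarith [h1]

lemma conic_sums {Q : Cls 8} (h : IsConic Q) :
    (∑ i, Q.2 i) = 3*Q.1 - 2 ∧ (∑ i, (Q.2 i)^2) = Q.1^2 := by
  have h2 := h.2
  rw [ip_K] at h2
  have h1 := h.1
  simp only [ip] at h1
  have hsq : ∀ t : Fin 8, Q.2 t * Q.2 t = (Q.2 t)^2 := fun t => by ring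
  rw [Finset.sum_congr rfl (fun t _ => hsq t)] at h1
  constructor
  · omega
  · nlinarith [h1]

lemma sum_ge_neg_sumsq (b : Fin 8 → ℤ) : -(∑ i, (b i)^2) ≤ ∑ i, b i := by
  have h : ∑ i, (-((b i)^2)) ≤ ∑ i, b i := by
    refine Finset.sum_le_sum ?_
    intro i _
    have := sq_add_self_nonneg (b i)
    omega
  rw [Finset.sum_neg_distrib] at h
  exact h

lemma a_nonneg_of_minusOne {L : Cls 8} (h : IsMinusOne L) : 0 ≤ L.1 := by
  obtain ⟨hs, hq⟩ := minusOne_sums h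
  set a := L.1 with ha
  have h1 : -(a^2 + 1) ≤ 3*a - 1 := by
    have := sum_ge_neg_sumsq L.2
    omega
  have h2 : (3*a - 1)^2 ≤ 8 * (a^2 + 1) := by
    have := cs Finset.univ L.2
    simp only [Finset.card_univ, Fintype.card_fin] at this
    rw [hs, hq] at this
    push_cast at this
    linarith
  by_contra h0
  push_neg at h0
  have hm : a = -1 := by nlinarith
  rw [hm] at h1
  norm_num at h1

lemma a_pos_of_conic {Q : Cls 8} (h : IsConic Q) : 1 ≤ Q.1 := by
  obtain ⟨hs, hq⟩ := conic_sums h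
  set a := Q.1 with ha
  have h2 : (3*a - 2)^2 ≤ 8 * a^2 := by
    have := cs Finset.univ Q.2
    simp only [Finset.card_univ, Fintype.card_fin] at this
    rw [hs, hq] at this
    push_cast at this
    linarith
  by_contra h0
  push_neg at h0
  nlinarith

lemma noether_arith (a x y z S Q e : ℤ) (he : e = 1 ∨ e = 2) (hea : e ≤ a)
    (hxy : y ≤ x) (hyz : z ≤ y) (hz : 0 ≤ z) (hS0 : 0 ≤ S) (hQ0 : 0 ≤ Q)
    (hQS : Q ≤ z * S) (hS5 : S ≤ 5 * z)
    (hsum : x + y + z + S = 3*a - e) (hsq : x^2 + y^2 + z^2 + Q = a^2 + 2 - e) :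
    a + 1 ≤ x + y + z := by
  by_contra hT
  push_neg at hT
  have hT' : x + y + z ≤ a := by omega
  rcases he with he | he <;> subst he <;>
    nlinarith [mul_nonneg (sub_nonneg.2 hxy) (sub_nonneg.2 hyz),
      mul_nonneg (sub_nonneg.2 hxy) hz, mul_nonneg (sub_nonneg.2 hyz) hz,
      mul_nonneg (sub_nonneg.2 hT') hz, mul_nonneg (sub_nonneg.2 hT') (le_trans hz hyz),
      mul_nonneg (sub_nonneg.2 hT') (le_trans (le_trans hz hyz) hxy),
      sq_nonneg (x - y), sq_nonneg (y - z), sq_nonneg (x + y + z - a),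
      mul_nonneg hS0 hz, mul_nonneg hQ0 hz]

lemma b_nonneg (b : Fin 8 → ℤ) (a e : ℤ) (he : e = 1 ∨ e = 2) (hea : e ≤ a)
    (hs : ∑ i, b i = 3*a - e) (hq : ∑ i, (b i)^2 = a^2 + 2 - e) : ∀ i, 0 ≤ b i := by
  intro i0
  by_contra hneg
  push_neg at hneg
  have hb0 : b i0 ≤ -1 := by omega
  have ha : 1 ≤ a := by omega
  have hmem : i0 ∈ Finset.univ := Finset.mem_univ i0
  have hS' : ∑ i ∈ Finset.univ.erase i0, b i = 3*a - e - b i0 := by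
    have := Finset.sum_erase_add Finset.univ b hmem
    omega
  have hQ' : ∑ i ∈ Finset.univ.erase i0, (b i)^2 = a^2 + 2 - e - (b i0)^2 := by
    have := Finset.sum_erase_add Finset.univ (fun i => (b i)^2) hmem
    omega
  have hcard : (Finset.univ.erase i0).card = 7 := by
    simp [Finset.card_erase_of_mem]
  have hcs := cs (Finset.univ.erase i0) b
  rw [hS', hQ', hcard] at hcs
  push_cast at hcs
  rcases he with he | he <;> subst he <;>
    nlinarith [sq_nonneg (b i0 + 1), sq_nonneg a, sq_nonneg (a-1),
      mul_nonneg (by linarith : (0:ℤ) ≤ -b i0 - 1) (by linarith : (0:ℤ) ≤ 6*a - 2)]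

lemma key_step (b : Fin 8 → ℤ) (a e : ℤ) (s : Finset (Fin 8))
    (hcard : 3 ≤ s.card) (hb0 : ∀ l, l ∉ s → b l = 0)
    (he : e = 1 ∨ e = 2) (hea : e ≤ a)
    (hs : ∑ i, b i = 3*a - e) (hq : ∑ i, (b i)^2 = a^2 + 2 - e) :
    ∃ i j k : Fin 8, i ∈ s ∧ j ∈ s ∧ k ∈ s ∧ i ≠ j ∧ i ≠ k ∧ j ≠ k ∧
      a + 1 ≤ b i + b j + b k := by
  have hnn : ∀ l, 0 ≤ b l := b_nonneg b a e he hea hs hq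
  obtain ⟨i, hi, hmaxi⟩ := Finset.exists_max_image s b (Finset.card_pos.mp (by omega))
  obtain ⟨j, hj, hmaxj⟩ := Finset.exists_max_image (s.erase i) b
    (Finset.card_pos.mp (by rw [Finset.card_erase_of_mem hi]; omega))
  obtain ⟨k, hk, hmaxk⟩ := Finset.exists_max_image ((s.erase i).erase j) b
    (Finset.card_pos.mp (by
      rw [Finset.card_erase_of_mem hj, Finset.card_erase_of_mem hi]; omega))
  have hji : j ≠ i := (Finset.mem_erase.mp hj).1
  have hkj : k ≠ j := (Finset.mem_erase.mp hk).1
  have hki : k ≠ i := (Finset.mem_erase.mp (Finset.mem_erase.mp hk).2).1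
  have hjs : j ∈ s := (Finset.mem_erase.mp hj).2
  have hks : k ∈ s := (Finset.mem_erase.mp (Finset.mem_erase.mp hk).2).2
  refine ⟨i, j, k, hi, hjs, hks, Ne.symm hji, Ne.symm hki, Ne.symm hkj, ?_⟩
  have hmax : ∀ l, l ≠ i → l ≠ j → l ≠ k → b l ≤ b k := by
    intro l hli hlj hlk
    by_cases hls : l ∈ s
    · exact hmaxk l (Finset.mem_erase.mpr ⟨hlj, Finset.mem_erase.mpr ⟨hli, hls⟩⟩)
    · rw [hb0 l hls]; exact hnn k
  set R := ((Finset.univ.erase i).erase j).erase k with hR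
  have hjmem : j ∈ Finset.univ.erase i := Finset.mem_erase.mpr ⟨hji, Finset.mem_univ j⟩
  have hkmem : k ∈ (Finset.univ.erase i).erase j :=
    Finset.mem_erase.mpr ⟨hkj, Finset.mem_erase.mpr ⟨hki, Finset.mem_univ k⟩⟩
  have hsplit : ∀ f : Fin 8 → ℤ, ∑ l, f l = ∑ l ∈ R, f l + f k + f j + f i := by
    intro f
    rw [← Finset.sum_erase_add Finset.univ f (Finset.mem_univ i),
      ← Finset.sum_erase_add (Finset.univ.erase i) f hjmem,
      ← Finset.sum_erase_add ((Finset.univ.erase i).erase j) f hkmem]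
  have hRcard : R.card = 5 := by
    rw [hR, Finset.card_erase_of_mem hkmem, Finset.card_erase_of_mem hjmem,
      Finset.card_erase_of_mem (Finset.mem_univ i)]
    simp
  have hRmax : ∀ l ∈ R, b l ≤ b k := by
    intro l hl
    have h1 := (Finset.mem_erase.mp hl).1
    have h2 := (Finset.mem_erase.mp (Finset.mem_erase.mp hl).2).1
    have h3 := (Finset.mem_erase.mp (Finset.mem_erase.mp (Finset.mem_erase.mp hl).2).2).1
    exact hmax l h3 h2 h1
  have hS5 : ∑ l ∈ R, b l ≤ 5 * b k := by
    calc ∑ l ∈ R, b l ≤ ∑ _l ∈ R, b k := Finset.sum_le_sum hRmax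
    _ = 5 * b k := by rw [Finset.sum_const, hRcard]; ring
  have hQS : ∑ l ∈ R, (b l)^2 ≤ b k * ∑ l ∈ R, b l := by
    rw [Finset.mul_sum]
    refine Finset.sum_le_sum ?_
    intro l hl
    have h1 : 0 ≤ b l := hnn l
    have h2 : b l ≤ b k := hRmax l hl
    nlinarith
  have hS0 : 0 ≤ ∑ l ∈ R, b l := Finset.sum_nonneg fun l _ => hnn l
  have hQ0 : 0 ≤ ∑ l ∈ R, (b l)^2 := Finset.sum_nonneg fun l _ => sq_nonneg _
  have hsb := hsplit b
  have hsq2 := hsplit (fun l => (b l)^2)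
  exact noether_arith a (b i) (b j) (b k) (∑ l ∈ R, b l) (∑ l ∈ R, (b l)^2) e he hea
    (hmaxi j hjs) (hmaxj k (Finset.mem_erase.mpr ⟨hki, hks⟩)) (hnn k) hS0 hQ0 hQS hS5
    (by omega) (by nlinarith [hq, hsq2])

/-! ### Base-case structure lemmas -/

lemma dichotomy_neg {b : Fin 8 → ℤ} (hs : ∑ i, b i = -1) (hq : ∑ i, (b i)^2 = 1) :
    ∃ i, b i = -1 ∧ ∀ l, l ≠ i → b l = 0 := by
  have hz : ∑ i, ((b i)^2 + b i) = 0 := by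
    rw [Finset.sum_add_distrib, hs, hq]; ring
  have hall := (Finset.sum_eq_zero_iff_of_nonneg
    (fun i _ => sq_add_self_nonneg (b i))).mp hz
  have hd : ∀ i, b i = 0 ∨ b i = -1 := by
    intro i
    have h1 := hall i (Finset.mem_univ i)
    have h2 : b i * (b i + 1) = 0 := by linear_combination h1
    rcases mul_eq_zero.mp h2 with h | h
    · exact Or.inl h
    · exact Or.inr (by omega)
  have hex : ∃ i, b i = -1 := by
    by_contra hno
    push_neg at hno
    have hzero : ∑ i, b i = 0 := Finset.sum_eq_zero (fun i _ => by
      rcases hd i with h | h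
      · exact h
      · exact absurd h (hno i))
    omega
  obtain ⟨i, hi⟩ := hex
  refine ⟨i, hi, ?_⟩
  have hrest : ∑ l ∈ Finset.univ.erase i, b l = 0 := by
    have := Finset.sum_erase_add Finset.univ b (Finset.mem_univ i)
    omega
  have h0 := (Finset.sum_eq_zero_iff_of_nonpos (fun l _ => by
    rcases hd l with h | h <;> omega)).mp hrest
  intro l hl
  exact h0 l (Finset.mem_erase.mpr ⟨hl, Finset.mem_univ l⟩)

lemma dichotomy_pos {b : Fin 8 → ℤ} (hs : ∑ i, b i = 1) (hq : ∑ i, (b i)^2 = 1) :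
    ∃ i, b i = 1 ∧ ∀ l, l ≠ i → b l = 0 := by
  have hz : ∑ i, ((b i)^2 - b i) = 0 := by
    rw [Finset.sum_sub_distrib, hs, hq]; ring
  have hall := (Finset.sum_eq_zero_iff_of_nonneg
    (fun i _ => sq_sub_self_nonneg (b i))).mp hz
  have hd : ∀ i, b i = 0 ∨ b i = 1 := by
    intro i
    have h1 := hall i (Finset.mem_univ i)
    have h2 : b i * (b i - 1) = 0 := by linear_combination h1
    rcases mul_eq_zero.mp h2 with h | h
    · exact Or.inl h
    · exact Or.inr (by omega)
  have hex : ∃ i, b i = 1 := by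
    by_contra hno
    push_neg at hno
    have hzero : ∑ i, b i = 0 := Finset.sum_eq_zero (fun i _ => by
      rcases hd i with h | h
      · exact h
      · exact absurd h (hno i))
    omega
  obtain ⟨i, hi⟩ := hex
  refine ⟨i, hi, ?_⟩
  have hrest : ∑ l ∈ Finset.univ.erase i, b l = 0 := by
    have := Finset.sum_erase_add Finset.univ b (Finset.mem_univ i)
    omega
  have h0 := (Finset.sum_eq_zero_iff_of_nonneg (fun l _ => by
    rcases hd l with h | h <;> omega)).mp hrest
  intro l hl
  exact h0 l (Finset.mem_erase.mpr ⟨hl, Finset.mem_univ l⟩)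

/-! ### Descent lemmas -/

lemma descent8 (L : Cls 8) (hL : IsMinusOne L) :
    ∃ g : Cls 8 ≃ₗ[ℤ] Cls 8, IsWeyl g ∧ g L = E8 := by
  suffices H : ∀ n : ℕ, ∀ L : Cls 8, IsMinusOne L → L.1.toNat = n →
      ∃ g : Cls 8 ≃ₗ[ℤ] Cls 8, IsWeyl g ∧ g L = E8 from H L.1.toNat L hL rfl
  intro n
  induction n using Nat.strong_induction_on with
  | _ n IH =>
    intro L hL hn
    obtain ⟨hs, hq⟩ := minusOne_sums hL
    have ha0 : 0 ≤ L.1 := a_nonneg_of_minusOne hL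
    by_cases hA : L.1 ≤ 0
    · -- base case : L = eᵢ
      have ha : L.1 = 0 := le_antisymm hA ha0
      rw [ha] at hs hq
      obtain ⟨i, hi, hrest⟩ := dichotomy_neg (b := L.2) (by omega) (by simpa using hq)
      by_cases hi7 : i = 7
      · subst hi7
        refine ⟨LinearEquiv.refl ℤ (Cls 8), weyl_id, ?_⟩
        simp only [LinearEquiv.refl_apply]
        refine Prod.ext ha (funext fun t => ?_)
        by_cases ht : t = 7
        · subst ht; simpa [E8] using hi
        · simp only [E8, ht, if_false]
          exact hrest t ht
      · refine ⟨refl (Rsw i 7) (Rsw_root i 7 hi7), refl_isWeyl _ _ (Rsw_K i 7 hi7), ?_⟩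
        have hc : ip L (Rsw i 7) = -1 := by
          rw [ip_Rsw _ _ _ hi7, hi, hrest 7 (Ne.symm hi7)]
          ring
        refine Prod.ext ?_ (funext fun t => ?_)
        · rw [refl_fst, hc, ha]
          simp [Rsw, E8]
        · rw [refl_snd, hc]
          by_cases ht : t = i
          · subst ht
            simp [Rsw, E8, hi, hi7]
          · by_cases ht7 : t = 7
            · subst ht7
              simp [Rsw, E8, Ne.symm hi7, hrest 7 (Ne.symm hi7)]
            · simp [Rsw, E8, ht, ht7, hrest t ht]
    · -- descent step
      push_neg at hA
      have ha1 : 1 ≤ L.1 := hA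
      obtain ⟨i, j, k, _, _, _, hij, hik, hjk, hT⟩ :=
        key_step L.2 L.1 1 Finset.univ (by simp)
          (fun l hl => absurd (Finset.mem_univ l) hl) (Or.inl rfl) ha1
          (by omega) (by omega)
      set w := refl (R3 i j k) (R3_root i j k hij hik hjk) with hw
      have hWw : IsWeyl w := refl_isWeyl _ _ (R3_K i j k hij hik hjk)
      have hL' : IsMinusOne (w L) := weyl_minusOne hWw hL
      have hfst : (w L).1 = 2 * L.1 - (L.2 i + L.2 j + L.2 k) := by
        rw [hw, refl_fst, ip_R3 _ _ _ _ hij hik hjk]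
        simp [R3]; ring
      have h0' : 0 ≤ (w L).1 := a_nonneg_of_minusOne hL'
      have hlt : (w L).1 < L.1 := by omega
      obtain ⟨g', hg', hgE⟩ := IH (w L).1.toNat (by omega) (w L) hL' rfl
      exact ⟨w.trans g', weyl_trans hWw hg', by
        simp only [LinearEquiv.trans_apply]; exact hgE⟩

lemma descent7 (L : Cls 8) (hL : IsMinusOne L) (h7 : L.2 7 = 0) :
    ∃ g : Cls 8 ≃ₗ[ℤ] Cls 8, IsWeyl g ∧ g E8 = E8 ∧ g L = F0 := by
  suffices H : ∀ n : ℕ, ∀ L : Cls 8, IsMinusOne L → L.2 7 = 0 → L.1.toNat = n →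
      ∃ g : Cls 8 ≃ₗ[ℤ] Cls 8, IsWeyl g ∧ g E8 = E8 ∧ g L = F0 from H L.1.toNat L hL h7 rfl
  intro n
  induction n using Nat.strong_induction_on with
  | _ n IH =>
    intro L hL h7 hn
    obtain ⟨hs, hq⟩ := minusOne_sums hL
    have ha0 : 0 ≤ L.1 := a_nonneg_of_minusOne hL
    by_cases hA : L.1 ≤ 0
    · -- base case : L = eᵢ with i ≠ 7
      have ha : L.1 = 0 := le_antisymm hA ha0
      rw [ha] at hs hq
      obtain ⟨i, hi, hrest⟩ := dichotomy_neg (b := L.2) (by omega) (by simpa using hq)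
      have hi7 : i ≠ 7 := by
        intro hcon; rw [hcon] at hi; omega
      by_cases hi0 : i = 0
      · subst hi0
        refine ⟨LinearEquiv.refl ℤ (Cls 8), weyl_id, rfl, ?_⟩
        simp only [LinearEquiv.refl_apply]
        refine Prod.ext ha (funext fun t => ?_)
        by_cases ht : t = 0
        · subst ht; simpa [F0] using hi
        · simp only [F0, ht, if_false]
          exact hrest t ht
      · refine ⟨refl (Rsw i 0) (Rsw_root i 0 hi0), refl_isWeyl _ _ (Rsw_K i 0 hi0), ?_, ?_⟩
        · rw [refl_apply, ip_Rsw _ _ _ hi0]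
          have : E8.2 i = 0 := by simp [E8, hi7]
          rw [this]
          have h2 : E8.2 0 = 0 := by simp [E8]
          rw [h2]
          simp
        · have hc : ip L (Rsw i 0) = -1 := by
            rw [ip_Rsw _ _ _ hi0, hi, hrest 0 (Ne.symm hi0)]
            ring
          refine Prod.ext ?_ (funext fun t => ?_)
          · rw [refl_fst, hc, ha]
            simp [Rsw, F0]
          · rw [refl_snd, hc]
            by_cases ht : t = i
            · subst ht
              simp [Rsw, F0, hi, hi0]
            · by_cases ht0 : t = 0
              · subst ht0
                simp [Rsw, F0, Ne.symm hi0, hrest 0 (Ne.symm hi0)]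
              · simp [Rsw, F0, ht, ht0, hrest t ht]
    · -- descent step with a Cremona transformation in the first seven indices
      push_neg at hA
      have ha1 : 1 ≤ L.1 := hA
      obtain ⟨i, j, k, hi, hj, hk, hij, hik, hjk, hT⟩ :=
        key_step L.2 L.1 1 (Finset.univ.erase 7)
          (by rw [Finset.card_erase_of_mem (Finset.mem_univ _)]; simp)
          (fun l hl => by
            have : l = 7 := by
              by_contra hcon
              exact hl (Finset.mem_erase.mpr ⟨hcon, Finset.mem_univ l⟩)
            rw [this]; exact h7)
          (Or.inl rfl) ha1 (by omega) (by omega)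
      have hi7 : i ≠ 7 := (Finset.mem_erase.mp hi).1
      have hj7 : j ≠ 7 := (Finset.mem_erase.mp hj).1
      have hk7 : k ≠ 7 := (Finset.mem_erase.mp hk).1
      set w := refl (R3 i j k) (R3_root i j k hij hik hjk) with hw
      have hWw : IsWeyl w := refl_isWeyl _ _ (R3_K i j k hij hik hjk)
      have hL' : IsMinusOne (w L) := weyl_minusOne hWw hL
      have hE : w E8 = E8 := by
        rw [hw, refl_apply, ip_R3 _ _ _ _ hij hik hjk]
        have h1 : E8.2 i = 0 := by simp [E8, hi7]
        have h2 : E8.2 j = 0 := by simp [E8, hj7]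
        have h3 : E8.2 k = 0 := by simp [E8, hk7]
        rw [h1, h2, h3]
        simp [E8]
      have h7' : (w L).2 7 = 0 := by
        rw [hw, refl_snd]
        have : (R3 i j k).2 7 = 0 := by
          simp [R3, Ne.symm hi7, Ne.symm hj7, Ne.symm hk7]
        rw [this, h7]
        ring
      have hfst : (w L).1 = 2 * L.1 - (L.2 i + L.2 j + L.2 k) := by
        rw [hw, refl_fst, ip_R3 _ _ _ _ hij hik hjk]
        simp [R3]; ring
      have h0' : 0 ≤ (w L).1 := a_nonneg_of_minusOne hL'
      have hlt : (w L).1 < L.1 := by omega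
      obtain ⟨g', hg', hgE, hgL⟩ := IH (w L).1.toNat (by omega) (w L) hL' h7' rfl
      refine ⟨w.trans g', weyl_trans hWw hg', ?_, ?_⟩
      · simp only [LinearEquiv.trans_apply]; rw [hE]; exact hgE
      · simp only [LinearEquiv.trans_apply]; exact hgL

lemma descentC (Q : Cls 8) (hQ : IsConic Q) (h7 : Q.2 7 = 0) :
    ∃ g : Cls 8 ≃ₗ[ℤ] Cls 8, IsWeyl g ∧ g E8 = E8 ∧ g Q = Q0 := by
  suffices H : ∀ n : ℕ, ∀ Q : Cls 8, IsConic Q → Q.2 7 = 0 → Q.1.toNat = n →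
      ∃ g : Cls 8 ≃ₗ[ℤ] Cls 8, IsWeyl g ∧ g E8 = E8 ∧ g Q = Q0 from H Q.1.toNat Q hQ h7 rfl
  intro n
  induction n using Nat.strong_induction_on with
  | _ n IH =>
    intro Q hQ h7 hn
    obtain ⟨hs, hq⟩ := conic_sums hQ
    have ha0 : 1 ≤ Q.1 := a_pos_of_conic hQ
    by_cases hA : Q.1 ≤ 1
    · -- base case : Q = ℓ - eᵢ with i ≠ 7
      have ha : Q.1 = 1 := le_antisymm hA ha0
      rw [ha] at hs hq
      obtain ⟨i, hi, hrest⟩ := dichotomy_pos (b := Q.2) (by omega) (by simpa using hq)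
      have hi7 : i ≠ 7 := by
        intro hcon; rw [hcon] at hi; omega
      by_cases hi0 : i = 0
      · subst hi0
        refine ⟨LinearEquiv.refl ℤ (Cls 8), weyl_id, rfl, ?_⟩
        simp only [LinearEquiv.refl_apply]
        refine Prod.ext ha (funext fun t => ?_)
        by_cases ht : t = 0
        · subst ht; simpa [Q0] using hi
        · simp only [Q0, ht, if_false]
          exact hrest t ht
      · refine ⟨refl (Rsw i 0) (Rsw_root i 0 hi0), refl_isWeyl _ _ (Rsw_K i 0 hi0), ?_, ?_⟩
        · rw [refl_apply, ip_Rsw _ _ _ hi0]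
          have h1 : E8.2 i = 0 := by simp [E8, hi7]
          have h2 : E8.2 0 = 0 := by simp [E8]
          rw [h1, h2]
          simp
        · have hc : ip Q (Rsw i 0) = 1 := by
            rw [ip_Rsw _ _ _ hi0, hi, hrest 0 (Ne.symm hi0)]
            ring
          refine Prod.ext ?_ (funext fun t => ?_)
          · rw [refl_fst, hc, ha]
            simp [Rsw, Q0]
          · rw [refl_snd, hc]
            by_cases ht : t = i
            · subst ht
              simp [Rsw, Q0, hi, hi0]
            · by_cases ht0 : t = 0
              · subst ht0
                simp [Rsw, Q0, Ne.symm hi0, hrest 0 (Ne.symm hi0)]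
              · simp [Rsw, Q0, ht, ht0, hrest t ht]
    · -- descent step
      push_neg at hA
      have ha2 : 2 ≤ Q.1 := hA
      obtain ⟨i, j, k, hi, hj, hk, hij, hik, hjk, hT⟩ :=
        key_step Q.2 Q.1 2 (Finset.univ.erase 7)
          (by rw [Finset.card_erase_of_mem (Finset.mem_univ _)]; simp)
          (fun l hl => by
            have : l = 7 := by
              by_contra hcon
              exact hl (Finset.mem_erase.mpr ⟨hcon, Finset.mem_univ l⟩)
            rw [this]; exact h7)
          (Or.inr rfl) ha2 (by omega) (by omega)
      have hi7 : i ≠ 7 := (Finset.mem_erase.mp hi).1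
      have hj7 : j ≠ 7 := (Finset.mem_erase.mp hj).1
      have hk7 : k ≠ 7 := (Finset.mem_erase.mp hk).1
      set w := refl (R3 i j k) (R3_root i j k hij hik hjk) with hw
      have hWw : IsWeyl w := refl_isWeyl _ _ (R3_K i j k hij hik hjk)
      have hQ' : IsConic (w Q) := weyl_conic hWw hQ
      have hE : w E8 = E8 := by
        rw [hw, refl_apply, ip_R3 _ _ _ _ hij hik hjk]
        have h1 : E8.2 i = 0 := by simp [E8, hi7]
        have h2 : E8.2 j = 0 := by simp [E8, hj7]
        have h3 : E8.2 k = 0 := by simp [E8, hk7]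
        rw [h1, h2, h3]
        simp [E8]
      have h7' : (w Q).2 7 = 0 := by
        rw [hw, refl_snd]
        have : (R3 i j k).2 7 = 0 := by
          simp [R3, Ne.symm hi7, Ne.symm hj7, Ne.symm hk7]
        rw [this, h7]
        ring
      have hfst : (w Q).1 = 2 * Q.1 - (Q.2 i + Q.2 j + Q.2 k) := by
        rw [hw, refl_fst, ip_R3 _ _ _ _ hij hik hjk]
        simp [R3]; ring
      have h0' : 1 ≤ (w Q).1 := a_pos_of_conic hQ'
      have hlt : (w Q).1 < Q.1 := by omega
      obtain ⟨g', hg', hgE, hgQ⟩ := IH (w Q).1.toNat (by omega) (w Q) hQ' h7' rfl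
      refine ⟨w.trans g', weyl_trans hWw hg', ?_, ?_⟩
      · simp only [LinearEquiv.trans_apply]; rw [hE]; exact hgE
      · simp only [LinearEquiv.trans_apply]; exact hgQ

/-! ### Negative definiteness of `K^⊥` and the final assembly -/

lemma E8_E8 : ip E8 E8 = -1 := by
  rw [ip_E8]; simp [E8]

lemma K_E8 : ip (Kcls 8) E8 = -1 := by
  rw [ip_K]
  simp only [E8, Finset.sum_ite_eq', Finset.mem_univ, if_true]
  norm_num

lemma K_K : ip (Kcls 8) (Kcls 8) = 1 := by
  rw [ip_K]
  simp [Kcls, Finset.sum_const]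

lemma minusOne_E8 : IsMinusOne E8 := ⟨E8_E8, K_E8⟩

lemma ip_expand_add (x y : Cls 8) : ip (x + y) (x + y) = ip x x + 2 * ip x y + ip y y := by
  rw [ip_add_left, ip_add_right, ip_add_right, ip_comm y x]; ring

lemma ip_expand_sub (x y : Cls 8) : ip (x - y) (x - y) = ip x x - 2 * ip x y + ip y y := by
  rw [ip_sub_left, ip_sub_right, ip_sub_right, ip_comm y x]; ring

lemma ip_self_nonpos {x : Cls 8} (hK : ip (Kcls 8) x = 0) : ip x x ≤ 0 := by
  rw [ip_K] at hK
  have hcs := cs Finset.univ x.2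
  simp only [Finset.card_univ, Fintype.card_fin] at hcs
  have hx : ip x x = x.1^2 - ∑ i, (x.2 i)^2 := by
    simp only [ip]
    have hsq : ∀ t : Fin 8, x.2 t * x.2 t = (x.2 t)^2 := fun t => by ring
    rw [Finset.sum_congr rfl (fun t _ => hsq t)]
    ring
  have hs : ∑ i, x.2 i = 3 * x.1 := by omega
  rw [hs] at hcs
  push_cast at hcs
  nlinarith

lemma eq_zero_of_ip_self {x : Cls 8} (hK : ip (Kcls 8) x = 0) (hx : ip x x = 0) : x = 0 := by
  have hK' := hK
  rw [ip_K] at hK'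
  have hcs := cs Finset.univ x.2
  simp only [Finset.card_univ, Fintype.card_fin] at hcs
  have hxx : ip x x = x.1^2 - ∑ i, (x.2 i)^2 := by
    simp only [ip]
    have hsq : ∀ t : Fin 8, x.2 t * x.2 t = (x.2 t)^2 := fun t => by ring
    rw [Finset.sum_congr rfl (fun t _ => hsq t)]
    ring
  have hs : ∑ i, x.2 i = 3 * x.1 := by omega
  rw [hs] at hcs
  push_cast at hcs
  have ha : x.1 = 0 := by nlinarith
  have hq : ∑ i, (x.2 i)^2 = 0 := by rw [hx] at hxx; nlinarith
  have hall := (Finset.sum_eq_zero_iff_of_nonneg (fun i _ => sq_nonneg (x.2 i))).mp hq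
  refine Prod.ext ha (funext fun t => ?_)
  have := hall t (Finset.mem_univ t)
  have ht : x.2 t = 0 := by nlinarith
  simpa using ht

lemma ip_E8_lower {M : Cls 8} (hM : IsMinusOne M) : -1 ≤ ip M E8 := by
  have hK : ip (Kcls 8) (M - E8) = 0 := by
    rw [ip_sub_right, hM.2, K_E8]; ring
  have h := ip_self_nonpos hK
  rw [ip_expand_sub, hM.1, E8_E8] at h
  linarith

lemma ip_E8_upper {M : Cls 8} (hM : IsMinusOne M) : ip M E8 ≤ 3 := by
  have hK : ip (Kcls 8) (M + E8 + (2:ℤ) • Kcls 8) = 0 := by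
    rw [ip_add_right, ip_add_right, ip_smul_right, hM.2, K_E8, K_K]; ring
  have h := ip_self_nonpos hK
  rw [ip_expand_add (M + E8), ip_expand_add, ip_smul_right, ip_smul_left, ip_smul_right,
    ip_add_left, hM.1, E8_E8, K_K] at h
  have hMK : ip M (Kcls 8) = -1 := by rw [ip_comm]; exact hM.2
  have hEK : ip E8 (Kcls 8) = -1 := by rw [ip_comm]; exact K_E8
  rw [hMK, hEK] at h
  linarith

lemma eq_E8_of_ip {M : Cls 8} (hM : IsMinusOne M) (h : ip M E8 = -1) : M = E8 := by
  have hK : ip (Kcls 8) (M - E8) = 0 := by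
    rw [ip_sub_right, hM.2, K_E8]; ring
  have hz : ip (M - E8) (M - E8) = 0 := by
    rw [ip_expand_sub, hM.1, E8_E8, h]; ring
  have := eq_zero_of_ip_self hK hz
  exact sub_eq_zero.mp this

lemma eq_top_of_ip {M : Cls 8} (hM : IsMinusOne M) (h : ip M E8 = 3) :
    M = -E8 - (2:ℤ) • Kcls 8 := by
  have hK : ip (Kcls 8) (M + E8 + (2:ℤ) • Kcls 8) = 0 := by
    rw [ip_add_right, ip_add_right, ip_smul_right, hM.2, K_E8, K_K]; ring
  have hMK : ip M (Kcls 8) = -1 := by rw [ip_comm]; exact hM.2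
  have hEK : ip E8 (Kcls 8) = -1 := by rw [ip_comm]; exact K_E8
  have hz : ip (M + E8 + (2:ℤ) • Kcls 8) (M + E8 + (2:ℤ) • Kcls 8) = 0 := by
    rw [ip_expand_add (M + E8), ip_expand_add, ip_smul_right, ip_smul_left, ip_smul_right,
      ip_add_left, hM.1, E8_E8, K_K, hMK, hEK, h]
    ring
  have h0 := eq_zero_of_ip_self hK hz
  have : M + (E8 + (2:ℤ) • Kcls 8) = 0 := by rw [← add_assoc]; exact h0
  have := eq_neg_of_add_eq_zero_left this
  rw [this]; abel

/-- Transitivity of the stabilizer of `E8` on `(−1)`-classes with given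
intersection number with `E8`. -/
lemma stab_trans (M₁ M₂ : Cls 8) (h₁ : IsMinusOne M₁) (h₂ : IsMinusOne M₂)
    (hc : ip M₁ E8 = ip M₂ E8) :
    ∃ g : Cls 8 ≃ₗ[ℤ] Cls 8, IsWeyl g ∧ g E8 = E8 ∧ g M₁ = M₂ := by
  have hlow := ip_E8_lower h₁
  have hup := ip_E8_upper h₁
  set c := ip M₁ E8 with hcdef
  have hc2 : ip M₂ E8 = c := hc.symm
  interval_cases c
  · -- c = -1 : M₁ = M₂ = E8
    refine ⟨LinearEquiv.refl ℤ (Cls 8), weyl_id, rfl, ?_⟩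
    simp only [LinearEquiv.refl_apply]
    rw [eq_E8_of_ip h₁ hcdef.symm, eq_E8_of_ip h₂ hc2]
  · -- c = 0 : both lie in the δ = 7 sublattice
    have h7₁ : M₁.2 7 = 0 := by rw [← ip_E8]; exact hcdef.symm
    have h7₂ : M₂.2 7 = 0 := by rw [← ip_E8]; exact hc2
    obtain ⟨g₁, hW₁, hE₁, hM₁⟩ := descent7 M₁ h₁ h7₁
    obtain ⟨g₂, hW₂, hE₂, hM₂⟩ := descent7 M₂ h₂ h7₂
    refine ⟨g₁.trans g₂.symm, weyl_trans hW₁ (weyl_symm hW₂), ?_, ?_⟩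
    · simp only [LinearEquiv.trans_apply]
      rw [hE₁]
      exact (LinearEquiv.symm_apply_eq g₂).mpr hE₂.symm
    · simp only [LinearEquiv.trans_apply]
      rw [hM₁]
      exact (LinearEquiv.symm_apply_eq g₂).mpr hM₂.symm
  · -- c = 1 : M + E8 is a conic in the δ = 7 sublattice
    have hcon : ∀ M : Cls 8, IsMinusOne M → ip M E8 = 1 →
        IsConic (M + E8) ∧ (M + E8).2 7 = 0 := by
      intro M hM hMc
      refine ⟨⟨?_, ?_⟩, ?_⟩
      · rw [ip_expand_add, hM.1, E8_E8, hMc]; ring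
      · rw [ip_add_right, hM.2, K_E8]
        norm_num
      · have h7 : M.2 7 = 1 := by rw [← ip_E8]; exact hMc
        simp only [Prod.snd_add, Pi.add_apply, h7, E8]
        norm_num
    obtain ⟨hN₁, h7N₁⟩ := hcon M₁ h₁ hcdef.symm
    obtain ⟨hN₂, h7N₂⟩ := hcon M₂ h₂ hc2
    obtain ⟨g₁, hW₁, hE₁, hQ₁⟩ := descentC (M₁ + E8) hN₁ h7N₁
    obtain ⟨g₂, hW₂, hE₂, hQ₂⟩ := descentC (M₂ + E8) hN₂ h7N₂
    refine ⟨g₁.trans g₂.symm, weyl_trans hW₁ (weyl_symm hW₂), ?_, ?_⟩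
    · simp only [LinearEquiv.trans_apply]
      rw [hE₁]
      exact (LinearEquiv.symm_apply_eq g₂).mpr hE₂.symm
    · simp only [LinearEquiv.trans_apply]
      have hN : g₂.symm (g₁ (M₁ + E8)) = M₂ + E8 := by
        rw [hQ₁]
        exact (LinearEquiv.symm_apply_eq g₂).mpr hQ₂.symm
      have hE : g₂.symm (g₁ E8) = E8 := by
        rw [hE₁]
        exact (LinearEquiv.symm_apply_eq g₂).mpr hE₂.symm
      have hsub : g₂.symm (g₁ M₁) = g₂.symm (g₁ (M₁ + E8)) - g₂.symm (g₁ E8) := by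
        rw [← map_sub, ← map_sub, add_sub_cancel_right]
      rw [hsub, hN, hE, add_sub_cancel_right]
  · -- c = 2 : reflect in the root E8 + K to reduce to c = 0
    set rE : Cls 8 := E8 + Kcls 8 with hrE
    have hMK₁ : ip M₁ (Kcls 8) = -1 := by rw [ip_comm]; exact h₁.2
    have hMK₂ : ip M₂ (Kcls 8) = -1 := by rw [ip_comm]; exact h₂.2
    have hEK : ip E8 (Kcls 8) = -1 := by rw [ip_comm]; exact K_E8
    have hroot : ip rE rE = -2 := by
      rw [hrE, ip_expand_add, E8_E8, hEK, K_K]; ring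
    have hKrE : ip (Kcls 8) rE = 0 := by
      rw [hrE, ip_add_right, K_E8, K_K]; ring
    set w := refl rE hroot with hw
    have hWw : IsWeyl w := refl_isWeyl _ _ hKrE
    have hip : ∀ M : Cls 8, IsMinusOne M → ip M E8 = 2 → ip M rE = 1 := by
      intro M hM hMc
      rw [hrE, ip_add_right, hMc]
      rw [ip_comm]
      rw [hM.2]
      norm_num
    have hrE7 : rE.2 7 = -2 := by
      simp [hrE, E8, Kcls]
    have hkey : ∀ M : Cls 8, IsMinusOne M → ip M E8 = 2 →
        IsMinusOne (w M) ∧ (w M).2 7 = 0 := by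
      intro M hM hMc
      refine ⟨weyl_minusOne hWw hM, ?_⟩
      rw [hw, refl_snd, hip M hM hMc, hrE7]
      have h7 : M.2 7 = 2 := by rw [← ip_E8]; exact hMc
      rw [h7]; ring
    obtain ⟨hm₁, h7₁⟩ := hkey M₁ h₁ hcdef.symm
    obtain ⟨hm₂, h7₂⟩ := hkey M₂ h₂ hc2
    obtain ⟨g₁, hW₁, hE₁, hF₁⟩ := descent7 (w M₁) hm₁ h7₁
    obtain ⟨g₂, hW₂, hE₂, hF₂⟩ := descent7 (w M₂) hm₂ h7₂
    set g := g₁.trans g₂.symm with hg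
    have hWg : IsWeyl g := weyl_trans hW₁ (weyl_symm hW₂)
    have hgE : g E8 = E8 := by
      rw [hg]; simp only [LinearEquiv.trans_apply]
      rw [hE₁]
      exact (LinearEquiv.symm_apply_eq g₂).mpr hE₂.symm
    have hgw : g (w M₁) = w M₂ := by
      rw [hg]; simp only [LinearEquiv.trans_apply]
      rw [hF₁]
      exact (LinearEquiv.symm_apply_eq g₂).mpr hF₂.symm
    have hgrE : g rE = rE := by
      rw [hrE, map_add, hgE, hWg.2]
    have hcomm : g (w M₁) = w (g M₁) := by
      rw [hw, refl_apply, refl_apply, map_add, map_smul, hgrE]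
      congr 2
      rw [← hWg.1 M₁ rE, hgrE]
    refine ⟨g, hWg, hgE, ?_⟩
    have hfin : w (g M₁) = w M₂ := by rw [← hcomm, hgw]
    exact (refl rE hroot).injective hfin
  · -- c = 3 : M₁ = M₂ = -E8 - 2K
    refine ⟨LinearEquiv.refl ℤ (Cls 8), weyl_id, rfl, ?_⟩
    simp only [LinearEquiv.refl_apply]
    rw [eq_top_of_ip h₁ hcdef.symm, eq_top_of_ip h₂ hc2]

end DP

open DP

/-- In the rank-9 del Pezzo lattice, the stabilizer of a (−1)-class L in the
Weyl group acts transitively on the (−1)-classes with a given intersection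
number with L. -/
theorem stmt9 (L L₁ L₂ : Cls 8)
    (hL : IsMinusOne L) (hL₁ : IsMinusOne L₁) (hL₂ : IsMinusOne L₂)
    (h : ip L₁ L = ip L₂ L) :
    ∃ g : Cls 8 ≃ₗ[ℤ] Cls 8, IsWeyl g ∧ g L = L ∧ g L₁ = L₂ := by
  obtain ⟨h0, hWh, hhE⟩ := descent8 L hL
  have hM₁ : IsMinusOne (h0 L₁) := weyl_minusOne hWh hL₁
  have hM₂ : IsMinusOne (h0 L₂) := weyl_minusOne hWh hL₂
  have hc₁ : ip (h0 L₁) E8 = ip L₁ L := by rw [← hhE]; exact hWh.1 L₁ L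
  have hc₂ : ip (h0 L₂) E8 = ip L₂ L := by rw [← hhE]; exact hWh.1 L₂ L
  obtain ⟨g', hWg', hgE, hgM⟩ := stab_trans (h0 L₁) (h0 L₂) hM₁ hM₂ (by rw [hc₁, hc₂, h])
  refine ⟨(h0.trans g').trans h0.symm,
    weyl_trans (weyl_trans hWh hWg') (weyl_symm hWh), ?_, ?_⟩
  · simp only [LinearEquiv.trans_apply]
    rw [hhE, hgE, ← hhE]
    simp
  · simp only [LinearEquiv.trans_apply]
    rw [hgM]
    simp
end
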